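/- arXiv:2111.04884 — 13 statements merged into one kernel-verified Lean document; each statement's English description precedes it below -/
import Mathlib

section
/- Let R be a Prüfer domain with quotient field K, let M be a finitely generated torsion-free R-module, and let U be a K-subspace of V := M ⊗_R K. Then U ∩ M is a finitely generated R-module. -/
/-!
A finitely generated `R`-submodule `N` of a `K`-vector space is projective when `R` is Prüfer:
induct on the dimension of `K ∙ N`. A functional `φ` with `φ N ≠ 0` maps `N` onto a nonzero
finitely generated fractional ideal, which is invertible and hence projective, so
`N ≅ (N ∩ ker φ) × φ N`, and `N ∩ ker φ` is finitely generated of smaller dimension.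
Applied to the image of `M` in `V ⧸ U`, this makes `U ∩ M` the kernel of a surjection from a
finitely generated module onto a finitely presented one, hence finitely generated.
-/

open nonZeroDivisors

/-- A Prüfer domain: every nonzero finitely generated ideal is invertible
(as a fractional ideal in the fraction field). -/
def IsPruferDomain (R : Type*) [CommRing R] [IsDomain R] : Prop :=
  ∀ I : Ideal R, I.FG → I ≠ ⊥ →
    IsUnit (I : FractionalIdeal R⁰ (FractionRing R))

open Module LinearMap Submodule

section Projective

variable {R : Type*} [CommRing R] {N P : Type*} [AddCommGroup N] [Module R N]
  [AddCommGroup P] [Module R P]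

theorem Module.Projective.of_ker_of_surjective {f : N →ₗ[R] P} (hf : Function.Surjective f)
    [Projective R P] [Projective R (ker f)] : Projective R N := by
  obtain ⟨l, hl⟩ := f.exists_rightInverse_of_surjective (range_eq_top.2 hf)
  exact .of_equiv
    ((f.exact_subtype_ker_map.splitSurjectiveEquiv (injective_subtype _) ⟨l, hl⟩).1).symm

variable {V W : Type*} [AddCommGroup V] [Module R V] [AddCommGroup W] [Module R W]

noncomputable def LinearMap.kerSubmoduleMapEquiv (f : V →ₗ[R] W) (N : Submodule R V) :
    ker (f.submoduleMap N) ≃ₗ[R] ↥(ker f ⊓ N) :=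
  (LinearEquiv.ofEq _ _ (ker_submoduleMap f N)).trans <|
    (equivMapOfInjective _ N.injective_subtype _).trans
      (LinearEquiv.ofEq _ _ (by rw [map_comap_subtype, inf_comm]))

theorem Submodule.FG.fg_ker_inf_of_projective_map {N : Submodule R V} (hN : N.FG)
    (f : V →ₗ[R] W) [Projective R (N.map f)] : (ker f ⊓ N).FG := by
  have : Module.Finite R N := .iff_fg.2 hN
  have := Module.finitePresentation_of_projective R (N.map f)
  have : Module.Finite R (ker (f.submoduleMap N)) :=
    .iff_fg.2 (Module.FinitePresentation.fg_ker _ (f.submoduleMap_surjective N))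
  exact Module.Finite.iff_fg.1 (.equiv (f.kerSubmoduleMapEquiv N))

theorem Submodule.projective_of_projective_map_of_projective_ker_inf {N : Submodule R V}
    (f : V →ₗ[R] W) [Projective R (N.map f)] [Projective R ↥(ker f ⊓ N : Submodule R V)] :
    Projective R N :=
  have : Projective R (ker (f.submoduleMap N)) := .of_equiv (f.kerSubmoduleMapEquiv N).symm
  .of_ker_of_surjective (f.submoduleMap_surjective N)

end Projective

theorem Submodule.FG.finiteDimensional_span {R K V : Type*} [CommRing R] [Field K]
    [Algebra R K] [AddCommGroup V] [Module K V] [Module R V] [IsScalarTower R K V]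
    {N : Submodule R V} (hN : N.FG) : FiniteDimensional K (span K (N : Set V)) := by
  obtain ⟨S, rfl⟩ := hN
  rw [span_span_of_tower]
  exact FiniteDimensional.span_finset K S

namespace IsPruferDomain

variable {R : Type*} [CommRing R] [IsDomain R] {K : Type*} [Field K] [Algebra R K]
  [IsFractionRing R K]

open FractionalIdeal

theorem isUnit_coeIdeal (hR : IsPruferDomain R) {I : Ideal R} (hI : I.FG) (hI0 : I ≠ ⊥) :
    IsUnit (I : FractionalIdeal R⁰ K) := by
  simpa using (hR I hI hI0).map (canonicalEquiv R⁰ (FractionRing R) K)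

theorem isUnit_of_fg (hR : IsPruferDomain R) {J : Submodule R K} (hJ : J.FG) (hJ0 : J ≠ ⊥) :
    IsUnit J := by
  let J' : FractionalIdeal R⁰ K := ⟨J, isFractional_of_fg hJ⟩
  obtain ⟨a, I, ha, hJI⟩ := J'.exists_eq_spanSingleton_mul
  have ha' : algebraMap R K a ≠ 0 := mt IsFractionRing.to_map_eq_zero_iff.1 ha
  have hIJ : (I : FractionalIdeal R⁰ K) = spanSingleton R⁰ (algebraMap R K a) * J' := by
    rw [hJI, ← mul_assoc, spanSingleton_mul_spanSingleton, mul_inv_cancel₀ ha',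
      spanSingleton_one, one_mul]
  have hI : I.FG := by
    rw [← coeIdeal_fg R⁰ (IsFractionRing.injective R K), hIJ, coe_mul, coe_spanSingleton]
    exact (fg_span_singleton _).mul hJ
  have hI0 : I ≠ ⊥ := by
    rintro rfl
    simp only [coeIdeal_bot, mul_zero] at hJI
    exact hJ0 ((congrArg ((↑) : FractionalIdeal R⁰ K → Submodule R K) hJI).trans coe_zero)
  have hunit : IsUnit (spanSingleton R⁰ (algebraMap R K a)⁻¹) :=
    .of_mul_eq_one (spanSingleton R⁰ (algebraMap R K a)) <| by
      rw [spanSingleton_mul_spanSingleton, inv_mul_cancel₀ ha', spanSingleton_one]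
  have : IsUnit J' := hJI ▸ hunit.mul (hR.isUnit_coeIdeal hI hI0)
  exact this.map (coeSubmoduleHom R⁰ K)

variable (K) in
theorem projective_of_fg (hR : IsPruferDomain R) {V : Type*} [AddCommGroup V] [Module K V]
    [Module R V] [IsScalarTower R K V] {N : Submodule R V} (hN : N.FG) : Projective R N := by
  obtain ⟨n, hn⟩ : ∃ n, finrank K (span K (N : Set V)) = n := ⟨_, rfl⟩
  induction n using Nat.strong_induction_on generalizing N with | _ n ih =>
  by_cases hN0 : N = ⊥
  · subst hN0; infer_instance
  obtain ⟨v, hvN, hv0⟩ := (Submodule.ne_bot_iff N).1 hN0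
  obtain ⟨φ, hφv⟩ : ∃ φ : Dual K V, φ v ≠ 0 := by
    simpa using (forall_dual_apply_eq_zero_iff K v).not.2 hv0
  let f : V →ₗ[R] K := φ.restrictScalars R
  have : Projective R (N.map f) :=
    projective_of_isUnit <| hR.isUnit_of_fg (hN.map f) <| (Submodule.ne_bot_iff _).2
      ⟨f v, mem_map_of_mem hvN, hφv⟩
  have hlt : span K ((ker f ⊓ N : Submodule R V) : Set V) < span K (N : Set V) := by
    refine SetLike.lt_iff_le_and_exists.2 ⟨span_mono inf_le_right, v, subset_span hvN, ?_⟩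
    have : span K ((ker f ⊓ N : Submodule R V) : Set V) ≤ ker φ :=
      span_le.2 fun x hx ↦ hx.1
    exact fun hv ↦ hφv (this hv)
  have := hN.finiteDimensional_span (K := K)
  have : Projective R ↥(ker f ⊓ N : Submodule R V) :=
    ih _ (hn ▸ finrank_lt_finrank_of_lt hlt) (hN.fg_ker_inf_of_projective_map f) rfl
  exact projective_of_projective_map_of_projective_ker_inf f

end IsPruferDomain

theorem stmt1_general (R : Type*) [CommRing R] [IsDomain R] (hR : IsPruferDomain R)
    (K : Type*) [Field K] [Algebra R K] [IsFractionRing R K]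
    (V : Type*) [AddCommGroup V] [Module K V] [Module R V] [IsScalarTower R K V]
    (M : Submodule R V) (hMfg : M.FG)
    (U : Submodule K V) :
    (U.restrictScalars R ⊓ M).FG := by
  let π : V →ₗ[R] V ⧸ U := U.mkQ.restrictScalars R
  have : Projective R (M.map π) := hR.projective_of_fg K (hMfg.map π)
  have hker : ker π = U.restrictScalars R := by
    rw [ker_restrictScalars, ker_mkQ]
  exact hker ▸ hMfg.fg_ker_inf_of_projective_map π

/-- Let `R` be a Prüfer domain with quotient field `K`, let `M` be a finitely
generated torsion-free `R`-module, viewed as an `R`-submodule of the `K`-vector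
space `V = M ⊗_R K` (so `M` spans `V` over `K`), and let `U` be a `K`-subspace
of `V`. Then `U ∩ M` is a finitely generated `R`-module. -/
theorem stmt1 (R : Type*) [CommRing R] [IsDomain R] (hR : IsPruferDomain R)
    (K : Type*) [Field K] [Algebra R K] [IsFractionRing R K]
    (V : Type*) [AddCommGroup V] [Module K V] [Module R V] [IsScalarTower R K V]
    (M : Submodule R V) (hMfg : M.FG) (hMspan : Submodule.span K (M : Set V) = ⊤)
    (U : Submodule K V) :
    (U.restrictScalars R ⊓ M).FG :=
  stmt1_general R hR K V M hMfg U
end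

section
/- Let R be a commutative ring and let A be an upper triangular n×n matrix over R with trace 0. Then there exist matrices X, B in Mat_n(R) with A = XB − BX. Moreover, X can be taken to be the matrix with 1's on the superdiagonal and 0's elsewhere. -/
open Finset

private lemma sum_ite_val {R : Type*} [AddCommMonoid R] {n : ℕ} (c : ℕ) (f : Fin n → R) :
    ∑ b : Fin n, (if c = (b : ℕ) then f b else 0) = if h : c < n then f ⟨c, h⟩ else 0 := by
  split
  · next h =>
    rw [Finset.sum_eq_single (⟨c, h⟩ : Fin n)]
    · simp
    · intro b _ hb
      rw [if_neg]
      intro hc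
      exact hb (by ext; simp; omega)
    · simp
  · next h =>
    apply Finset.sum_eq_zero
    intro b _
    rw [if_neg]
    intro hc
    exact h (hc ▸ b.isLt)

/-- Let `R` be a commutative ring and `A` an upper triangular `n × n` matrix over `R`
with trace 0. Then `A = X * B - B * X` for some matrices `X`, `B`, where `X` can be
taken to be the matrix with 1's on the superdiagonal and 0's elsewhere. -/
theorem stmt3 (R : Type*) [CommRing R] (n : ℕ) (A : Matrix (Fin n) (Fin n) R)
    (hA : ∀ i j : Fin n, j < i → A i j = 0) (htr : A.trace = 0) :
    ∃ B : Matrix (Fin n) (Fin n) R,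
      A = (Matrix.of fun i j : Fin n => if (i : ℕ) + 1 = (j : ℕ) then (1 : R) else 0) * B
          - B * (Matrix.of fun i j : Fin n => if (i : ℕ) + 1 = (j : ℕ) then (1 : R) else 0) := by
  classical
  simp only [Matrix.trace, Matrix.diag] at htr
  set X : Matrix (Fin n) (Fin n) R :=
    Matrix.of fun i j : Fin n => if (i : ℕ) + 1 = (j : ℕ) then (1 : R) else 0 with hX
  set B : Matrix (Fin n) (Fin n) R :=
    Matrix.of fun i j : Fin n =>
      ∑ a : Fin n, ∑ b : Fin n,
        if (a : ℕ) + 1 + (j : ℕ) = (b : ℕ) + (i : ℕ) ∧ (a : ℕ) < (i : ℕ) then A a b else 0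
    with hB
  refine ⟨B, ?_⟩
  ext i j
  -- compute (X*B) i j
  have h1 : (X * B) i j = if h : (i : ℕ) + 1 < n then B ⟨(i : ℕ) + 1, h⟩ j else 0 := by
    rw [Matrix.mul_apply]
    simp only [hX, Matrix.of_apply, ite_mul, one_mul, zero_mul]
    exact sum_ite_val _ _
  -- compute (B*X) i j
  have h2 : (B * X) i j = if h : 0 < (j : ℕ) then
      B i ⟨(j : ℕ) - 1, lt_of_le_of_lt (Nat.pred_le _) j.isLt⟩ else 0 := by
    rw [Matrix.mul_apply]
    have : ∀ k : Fin n, B i k * X k j = if (k : ℕ) + 1 = (j : ℕ) then B i k else 0 := by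
      intro k
      simp only [hX, Matrix.of_apply]
      split <;> simp
    rw [Finset.sum_congr rfl fun k _ => this k]
    split
    · next h =>
      rw [Finset.sum_eq_single (⟨(j:ℕ)-1, lt_of_le_of_lt (Nat.pred_le _) j.isLt⟩ : Fin n)]
      · rw [if_pos]; simp; omega
      · intro b _ hb
        rw [if_neg]
        intro hc
        exact hb (by ext; simp; omega)
      · simp
    · next h =>
      apply Finset.sum_eq_zero
      intro b _
      rw [if_neg]
      omega
  -- the partial diagonal sums
  set S : ℕ → R := fun t =>
    ∑ a : Fin n, ∑ b : Fin n,
      if (a : ℕ) + (j : ℕ) = (b : ℕ) + (i : ℕ) ∧ (a : ℕ) < t then A a b else 0 with hSdef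
  have hB1 : ∀ h : (i : ℕ) + 1 < n, B ⟨(i : ℕ) + 1, h⟩ j = S ((i : ℕ) + 1) := by
    intro h
    simp only [hB, Matrix.of_apply, hSdef]
    refine Finset.sum_congr rfl fun a _ => Finset.sum_congr rfl fun b _ => ?_
    refine if_congr ?_ rfl rfl
    constructor <;> (intro ⟨h1, h2⟩; exact ⟨by omega, by omega⟩)
  have hB2 : ∀ h : 0 < (j : ℕ),
      B i ⟨(j : ℕ) - 1, lt_of_le_of_lt (Nat.pred_le _) j.isLt⟩ = S (i : ℕ) := by
    intro h
    simp only [hB, Matrix.of_apply, hSdef]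
    refine Finset.sum_congr rfl fun a _ => Finset.sum_congr rfl fun b _ => ?_
    refine if_congr ?_ rfl rfl
    omega
  have key : S ((i : ℕ) + 1) = A i j + S (i : ℕ) := by
    simp only [hSdef]
    have split1 : ∀ a b : Fin n,
        (if (a : ℕ) + (j : ℕ) = (b : ℕ) + (i : ℕ) ∧ (a : ℕ) < (i : ℕ) + 1 then A a b else 0)
        = (if (a : ℕ) = (i : ℕ) ∧ (b : ℕ) = (j : ℕ) then A a b else 0)
          + (if (a : ℕ) + (j : ℕ) = (b : ℕ) + (i : ℕ) ∧ (a : ℕ) < (i : ℕ) then A a b else 0) := by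
      intro a b
      split_ifs <;> first | omega | ring
    calc (∑ a : Fin n, ∑ b : Fin n,
        if (a : ℕ) + (j : ℕ) = (b : ℕ) + (i : ℕ) ∧ (a : ℕ) < (i : ℕ) + 1 then A a b else 0)
        = (∑ a : Fin n, ∑ b : Fin n,
            ((if (a : ℕ) = (i : ℕ) ∧ (b : ℕ) = (j : ℕ) then A a b else 0)
              + (if (a : ℕ) + (j : ℕ) = (b : ℕ) + (i : ℕ) ∧ (a : ℕ) < (i : ℕ) then A a b
                  else 0))) := by
          exact Finset.sum_congr rfl fun a _ => Finset.sum_congr rfl fun b _ => split1 a b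
      _ = (∑ a : Fin n, ∑ b : Fin n,
            (if (a : ℕ) = (i : ℕ) ∧ (b : ℕ) = (j : ℕ) then A a b else 0))
          + (∑ a : Fin n, ∑ b : Fin n,
            (if (a : ℕ) + (j : ℕ) = (b : ℕ) + (i : ℕ) ∧ (a : ℕ) < (i : ℕ) then A a b else 0)) := by
          rw [← Finset.sum_add_distrib]
          exact Finset.sum_congr rfl fun a _ => Finset.sum_add_distrib
      _ = A i j + _ := by
          congr 1
          rw [Finset.sum_eq_single i]
          · rw [Finset.sum_eq_single j]
            · simp
            · intro b _ hb
              rw [if_neg]; intro ⟨_, hc⟩; exact hb (by ext; omega)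
            · simp
          · intro a _ ha
            apply Finset.sum_eq_zero
            intro b _
            rw [if_neg]; intro ⟨hc, _⟩; exact ha (by ext; omega)
          · simp
  rw [Matrix.sub_apply, h1, h2]
  by_cases hi : (i : ℕ) + 1 < n
  · rw [dif_pos hi, hB1 hi]
    by_cases hj : 0 < (j : ℕ)
    · rw [dif_pos hj, hB2 hj, key]; ring
    · rw [dif_neg hj, sub_zero, key]
      have : S (i : ℕ) = 0 := by
        simp only [hSdef]
        refine Finset.sum_eq_zero fun a _ => Finset.sum_eq_zero fun b _ => ?_
        rw [if_neg]; omega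
      rw [this, add_zero]
  · rw [dif_neg hi, zero_sub]
    have hin : (i : ℕ) + 1 = n := by omega
    have hSn : S ((i : ℕ) + 1) = 0 := by
      simp only [hSdef]
      by_cases hji : (j : ℕ) < (i : ℕ)
      · refine Finset.sum_eq_zero fun a _ => Finset.sum_eq_zero fun b _ => ?_
        split_ifs with hc
        · exact hA a b (Fin.lt_def.mpr (by omega))
        · rfl
      · have hji' : (j : ℕ) = (i : ℕ) := by omega
        have : ∀ a : Fin n, (∑ b : Fin n,
            if (a : ℕ) + (j : ℕ) = (b : ℕ) + (i : ℕ) ∧ (a : ℕ) < (i : ℕ) + 1 then A a b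
            else 0) = A a a := by
          intro a
          rw [Finset.sum_eq_single a]
          · rw [if_pos ⟨by omega, by omega⟩]
          · intro b _ hb
            rw [if_neg]; intro ⟨hc, _⟩; exact hb (by ext; omega)
          · simp
        rw [Finset.sum_congr rfl fun a _ => this a]
        exact htr
    by_cases hj : 0 < (j : ℕ)
    · rw [dif_pos hj, hB2 hj]
      have := key
      rw [hSn] at this
      linear_combination -this
    · rw [dif_neg hj, neg_zero]
      by_cases hi0 : 0 < (i : ℕ)
      · exact hA i j (Fin.lt_def.mpr (by omega))
      · have hn1 : n = 1 := by omega
        subst hn1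
        have hij : i = j := by ext; omega
        rw [← hij]
        have := htr
        rw [Fin.sum_univ_one] at this
        have hi0' : i = 0 := by ext; omega
        rw [hi0']
        exact this
end

section
/- Let R be a Bézout domain whose quotient field is algebraically closed. Then for every n ≥ 1, every n×n matrix over R with trace 0 is a commutator, i.e., equals AB − BA for some A, B in Mat_n(R). -/
/-!
Over an integrally closed domain whose fraction field is algebraically closed, every root of the
characteristic polynomial lies in `R`, so every square matrix has an eigenvector over `R`. Over a
Bézout domain, a vector can be moved by an invertible matrix to a multiple of the last basis
vector (by repeated `2 × 2` gcd steps), so an eigenvector can be made the last basis vector and,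
by induction, every matrix is similar to a lower triangular one. A lower triangular matrix `T`
of trace zero is the commutator `S X - X S` of the lower shift `S` with the matrix `X` whose
entries are the sums of `T` along its diagonals, and commutators are preserved by similarity.
-/

open Matrix OrderDual Finset

theorem Fin.append_zero_vecCons_eq_single_last {M : Type*} [Zero M] {n : ℕ} (x : M) :
    Fin.append (0 : Fin n → M) ![x] = Pi.single (Fin.last n) x := by
  rw [Fin.append_right_eq_snoc]
  ext i
  induction i using Fin.lastCases <;> simp [Fin.castSucc_ne_last]

theorem Fin.append_append_vecCons {α : Type*} {n : ℕ} (u : Fin n → α) (a b : α) :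
    Fin.append (Fin.append u ![a]) ![b] = Fin.append u ![a, b] := by
  rw [Fin.append_right_eq_snoc (Fin.append u ![a]), ← Fin.append_snoc]
  congr 1
  ext j
  fin_cases j <;> rfl

namespace Matrix

section FinBlocks

variable {α : Type*} {m k l p : ℕ}
  (A : Matrix (Fin m) (Fin l) α) (B : Matrix (Fin m) (Fin p) α)
  (C : Matrix (Fin k) (Fin l) α) (D : Matrix (Fin k) (Fin p) α)

def finFromBlocks : Matrix (Fin (m + k)) (Fin (l + p)) α :=
  reindex finSumFinEquiv finSumFinEquiv (fromBlocks A B C D)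

@[simp]
theorem finFromBlocks_castAdd_castAdd (i : Fin m) (j : Fin l) :
    finFromBlocks A B C D (Fin.castAdd k i) (Fin.castAdd p j) = A i j := by
  simp [finFromBlocks]

@[simp]
theorem finFromBlocks_castAdd_natAdd (i : Fin m) (j : Fin p) :
    finFromBlocks A B C D (Fin.castAdd k i) (Fin.natAdd l j) = B i j := by
  simp [finFromBlocks]

@[simp]
theorem finFromBlocks_natAdd_castAdd (i : Fin k) (j : Fin l) :
    finFromBlocks A B C D (Fin.natAdd m i) (Fin.castAdd p j) = C i j := by
  simp [finFromBlocks]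

@[simp]
theorem finFromBlocks_natAdd_natAdd (i : Fin k) (j : Fin p) :
    finFromBlocks A B C D (Fin.natAdd m i) (Fin.natAdd l j) = D i j := by
  simp [finFromBlocks]

theorem finFromBlocks_submatrix (M : Matrix (Fin (m + k)) (Fin (l + p)) α) :
    finFromBlocks (M.submatrix (Fin.castAdd k) (Fin.castAdd p))
      (M.submatrix (Fin.castAdd k) (Fin.natAdd l)) (M.submatrix (Fin.natAdd m) (Fin.castAdd p))
      (M.submatrix (Fin.natAdd m) (Fin.natAdd l)) = M := by
  ext i j
  induction i using Fin.addCases <;> induction j using Fin.addCases <;> simp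

theorem finFromBlocks_mul [NonUnitalNonAssocSemiring α] {q r : ℕ}
    (A' : Matrix (Fin l) (Fin q) α) (B' : Matrix (Fin l) (Fin r) α)
    (C' : Matrix (Fin p) (Fin q) α) (D' : Matrix (Fin p) (Fin r) α) :
    finFromBlocks A B C D * finFromBlocks A' B' C' D' =
      finFromBlocks (A * A' + B * C') (A * B' + B * D') (C * A' + D * C') (C * B' + D * D') := by
  simp only [finFromBlocks, reindex_apply, submatrix_mul_equiv, fromBlocks_multiply]

theorem finFromBlocks_mulVec_append [NonUnitalNonAssocSemiring α] (u : Fin l → α)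
    (w : Fin p → α) :
    finFromBlocks A B C D *ᵥ Fin.append u w =
      Fin.append (A *ᵥ u + B *ᵥ w) (C *ᵥ u + D *ᵥ w) := by
  ext i
  induction i using Fin.addCases <;>
    simp [finFromBlocks, submatrix_mulVec_equiv, fromBlocks_mulVec, Function.comp_def]

theorem BlockTriangular.finFromBlocks_zero₁₂ [Zero α] {A : Matrix (Fin m) (Fin m) α}
    {D : Matrix (Fin k) (Fin k) α} (hA : A.BlockTriangular toDual) (hD : D.BlockTriangular toDual)
    (C : Matrix (Fin k) (Fin m) α) : (finFromBlocks A 0 C D).BlockTriangular toDual := by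
  intro i j hij
  rw [toDual_lt_toDual] at hij
  induction i using Fin.addCases <;> induction j using Fin.addCases
  · exact (finFromBlocks_castAdd_castAdd ..).trans
      (hA ((Fin.strictMono_castAdd k).lt_iff_lt.mp hij))
  · simp
  · rw [Fin.lt_def, Fin.val_natAdd, Fin.val_castAdd] at hij; omega
  · exact (finFromBlocks_natAdd_natAdd ..).trans (hD ((Fin.natAdd_lt_natAdd_iff m).mp hij))

@[simp]
theorem finFromBlocks_one [Zero α] [One α] :
    finFromBlocks (1 : Matrix (Fin m) (Fin m) α) 0 0 (1 : Matrix (Fin k) (Fin k) α) = 1 := by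
  simp [finFromBlocks]

@[simps]
def finFromBlocksUnits [Semiring α] (P : (Matrix (Fin m) (Fin m) α)ˣ)
    (Q : (Matrix (Fin k) (Fin k) α)ˣ) : (Matrix (Fin (m + k)) (Fin (m + k)) α)ˣ where
  val := finFromBlocks P 0 0 Q
  inv := finFromBlocks ↑P⁻¹ 0 0 ↑Q⁻¹
  val_inv := by simp [finFromBlocks_mul]
  inv_val := by simp [finFromBlocks_mul]

end FinBlocks

section LowerTriangularCommutator

variable {R : Type*} [Ring R] {n : ℕ}

def extendZero (T : Matrix (Fin n) (Fin n) R) (i j : ℕ) : R :=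
  if h : i < n ∧ j < n then T ⟨i, h.1⟩ ⟨j, h.2⟩ else 0

def diagTailSum (T : Matrix (Fin n) (Fin n) R) (i j : ℕ) : R :=
  ∑ k ∈ range n, extendZero T (i + k) (j + k)

variable {T : Matrix (Fin n) (Fin n) R}

@[simp]
theorem extendZero_val (i j : Fin n) : extendZero T i j = T i j := by
  simp [extendZero]

theorem extendZero_of_le_right {i j : ℕ} (hj : n ≤ j) : extendZero T i j = 0 := by
  simp only [extendZero, dite_eq_right_iff, forall_and_index]; omega

theorem diagTailSum_eq_add (i j : ℕ) :
    diagTailSum T i j = extendZero T i j + diagTailSum T (i + 1) (j + 1) := by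
  have hn : extendZero T (i + n) (j + n) = 0 := extendZero_of_le_right (by omega)
  simp only [diagTailSum]
  rw [← add_zero (∑ k ∈ range n, _), ← hn, ← sum_range_succ, sum_range_succ']
  simp only [add_zero, add_comm, add_left_comm]

theorem diagTailSum_of_le_right {i j : ℕ} (hj : n ≤ j) : diagTailSum T i j = 0 :=
  sum_eq_zero fun _ _ => extendZero_of_le_right (by omega)

theorem diagTailSum_zero_left (hT : T.BlockTriangular toDual) (htr : T.trace = 0) (j : ℕ) :
    diagTailSum T 0 j = 0 := by
  rcases Nat.eq_zero_or_pos j with rfl | hj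
  · simpa [diagTailSum, trace, ← Fin.sum_univ_eq_sum_range (fun k => extendZero T k k)] using htr
  · refine sum_eq_zero fun k _ => ?_
    unfold extendZero
    split_ifs with h
    · exact hT (by simp only [toDual_lt_toDual, Fin.lt_def]; omega)
    · rfl

variable (R) in
def lowerShift (n : ℕ) : Matrix (Fin n) (Fin n) R :=
  of fun i j => if (i : ℕ) = j + 1 then 1 else 0

theorem lowerShift_mul_apply (B : Matrix (Fin n) (Fin n) R) (i j : Fin n) :
    (lowerShift R n * B) i j = if h : (i : ℕ) = 0 then 0 else B ⟨i - 1, by omega⟩ j := by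
  rw [mul_apply]
  split_ifs with h
  · exact sum_eq_zero fun k _ => by simp [lowerShift, h]
  · rw [sum_eq_single ⟨i - 1, by omega⟩ (fun k _ hk => ?_) (by simp)]
    · simp only [lowerShift, of_apply, ite_mul, one_mul, zero_mul, ite_eq_left_iff]; omega
    · simp only [ne_eq, Fin.ext_iff, lowerShift, of_apply, ite_mul, one_mul, zero_mul,
        ite_eq_right_iff] at hk ⊢
      omega

theorem mul_lowerShift_apply (B : Matrix (Fin n) (Fin n) R) (i j : Fin n) :
    (B * lowerShift R n) i j = if h : (j : ℕ) + 1 < n then B i ⟨j + 1, h⟩ else 0 := by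
  rw [mul_apply]
  split_ifs with h
  · rw [sum_eq_single ⟨j + 1, h⟩ (fun k _ hk => ?_) (by simp)]
    · simp [lowerShift]
    · simp only [ne_eq, Fin.ext_iff, lowerShift, of_apply, mul_ite, mul_one, mul_zero,
        ite_eq_right_iff] at hk ⊢
      omega
  · exact sum_eq_zero fun k _ => by
      simp only [lowerShift, of_apply, mul_ite, mul_one, mul_zero, ite_eq_right_iff]; omega

theorem exists_eq_commutator_of_blockTriangular_toDual (hT : T.BlockTriangular toDual)
    (htr : T.trace = 0) : ∃ A B : Matrix (Fin n) (Fin n) R, T = A * B - B * A := by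
  set X : Matrix (Fin n) (Fin n) R := of fun i j => diagTailSum T (i + 1) j
  refine ⟨lowerShift R n, X, ?_⟩
  ext i j
  have hSX : (lowerShift R n * X) i j = diagTailSum T i j := by
    rw [lowerShift_mul_apply]
    split_ifs with h
    · rw [h, diagTailSum_zero_left hT htr]
    · simp only [X, of_apply, Nat.sub_add_cancel (Nat.pos_of_ne_zero h)]
  have hXS : (X * lowerShift R n) i j = diagTailSum T (i + 1) (j + 1) := by
    rw [mul_lowerShift_apply]
    split_ifs with h
    · rfl
    · rw [diagTailSum_of_le_right (by omega)]
  rw [sub_apply, hSX, hXS, diagTailSum_eq_add, extendZero_val, add_sub_cancel_right]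

end LowerTriangularCommutator

theorem exists_mulVec_eq_smul_of_isAlgClosed {R : Type*} [CommRing R] [IsDomain R]
    [IsIntegrallyClosed R] [IsAlgClosed (FractionRing R)] {ι : Type*} [Fintype ι] [DecidableEq ι]
    [Nonempty ι] (M : Matrix ι ι R) :
    ∃ (c : R) (v : ι → R), v ≠ 0 ∧ M *ᵥ v = c • v := by
  set f := algebraMap R (FractionRing R)
  obtain ⟨μ, hμ⟩ := IsAlgClosed.exists_root (M.map f).charpoly
    (by rw [charpoly_degree_eq_dim]; exact_mod_cast Fintype.card_ne_zero)
  rw [charpoly_map] at hμ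
  obtain ⟨c, rfl⟩ := (IsIntegrallyClosed.isIntegral_iff (K := FractionRing R)).mp
    (⟨M.charpoly, M.charpoly_monic, by rwa [← Polynomial.eval_map]⟩ : IsIntegral R μ)
  rw [Polynomial.IsRoot, Polynomial.eval_map, Polynomial.eval₂_at_apply,
    map_eq_zero_iff f (IsFractionRing.injective R _), eval_charpoly] at hμ
  obtain ⟨v, hv0, hv⟩ := exists_mulVec_eq_zero_iff.mpr hμ
  refine ⟨c, v, hv0, ?_⟩
  rw [sub_mulVec, sub_eq_zero] at hv
  simpa using hv.symm

section Bezout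

variable {R : Type*} [CommRing R] [IsDomain R] [IsBezout R]

theorem exists_unit_mulVec_eq_vecCons_zero (a b : R) :
    ∃ (A : (Matrix (Fin 2) (Fin 2) R)ˣ) (g : R), ↑A *ᵥ ![a, b] = ![0, g] := by
  classical
  let := IsBezout.toGCDDomain R
  obtain ⟨a', b', ha, hb, hunit⟩ := extract_gcd a b
  obtain ⟨x, y, hxy⟩ := (gcd_isUnit_iff_isRelPrime.mp hunit).isCoprime
  generalize gcd a b = g at ha hb
  subst ha hb
  have hdet : IsUnit (!![b', -a'; x, y]).det := by
    rw [det_fin_two_of, show b' * y - -a' * x = 1 by linear_combination hxy]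
    exact isUnit_one
  refine ⟨((isUnit_iff_isUnit_det _).mpr hdet).unit, g, ?_⟩
  ext i
  fin_cases i <;>
    simp only [IsUnit.unit_spec, mulVec_cons, mulVec_empty, Pi.add_apply, Pi.smul_apply,
      Function.comp_apply, Fin.zero_eta, Fin.mk_one, cons_val_zero, cons_val_one, cons_val_fin_one,
      head_cons, tail_cons, smul_eq_mul, add_zero]
  · ring
  · linear_combination g * hxy

theorem exists_unit_mulVec_eq_single_last {n : ℕ} (v : Fin (n + 1) → R) :
    ∃ (P : (Matrix (Fin (n + 1)) (Fin (n + 1)) R)ˣ) (g : R),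
      ↑P *ᵥ v = Pi.single (Fin.last n) g := by
  induction n with
  | zero => exact ⟨1, v 0, by ext i; fin_cases i; simp⟩
  | succ n ih =>
    obtain ⟨P, g', hP⟩ := ih (Fin.init v)
    obtain ⟨A, g, hA⟩ := exists_unit_mulVec_eq_vecCons_zero g' (v (Fin.last _))
    refine ⟨finFromBlocksUnits (m := n) 1 A *
      finFromBlocksUnits P (1 : (Matrix (Fin 1) (Fin 1) R)ˣ), g, ?_⟩
    have hv : v = Fin.append (Fin.init v) ![v (Fin.last _)] := by
      simp [Fin.append_right_eq_snoc, Fin.snoc_init_self]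
    rw [Units.val_mul, ← mulVec_mulVec, hv, val_finFromBlocksUnits, val_finFromBlocksUnits,
      finFromBlocks_mulVec_append]
    simp only [hP, zero_mulVec, add_zero, zero_add, Units.val_one, one_mulVec]
    rw [← Fin.append_zero_vecCons_eq_single_last, Fin.append_append_vecCons,
      finFromBlocks_mulVec_append]
    simp only [hA, zero_mulVec, add_zero, zero_add, mulVec_zero]
    rw [← Fin.append_append_vecCons, Fin.append_zero_vecCons_eq_single_last, Pi.single_zero,
      Fin.append_zero_vecCons_eq_single_last]

theorem exists_unit_conj_apply_castSucc_last_eq_zero [IsAlgClosed (FractionRing R)] {n : ℕ}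
    (M : Matrix (Fin (n + 1)) (Fin (n + 1)) R) :
    ∃ P : (Matrix (Fin (n + 1)) (Fin (n + 1)) R)ˣ,
      ∀ i : Fin n, (P.val * M * P⁻¹.val) i.castSucc (Fin.last n) = 0 := by
  obtain ⟨c, v, hv0, hv⟩ := M.exists_mulVec_eq_smul_of_isAlgClosed
  obtain ⟨P, g, hP⟩ := exists_unit_mulVec_eq_single_last v
  refine ⟨P, fun i => ?_⟩
  have hg : g ≠ 0 := by
    rintro rfl
    apply hv0
    simpa using congr(P⁻¹.val *ᵥ $hP)
  have hPv : (P.val * M * P⁻¹.val) *ᵥ Pi.single (Fin.last n) g =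
      c • Pi.single (Fin.last n) g := by
    rw [← hP, mulVec_mulVec, Matrix.mul_assoc, Units.inv_mul, Matrix.mul_one,
      ← mulVec_mulVec, hv, mulVec_smul]
  simpa [hg, Fin.castSucc_ne_last] using congr_fun hPv i.castSucc

theorem exists_unit_conj_blockTriangular_toDual [IsAlgClosed (FractionRing R)] {n : ℕ}
    (M : Matrix (Fin n) (Fin n) R) :
    ∃ P : (Matrix (Fin n) (Fin n) R)ˣ,
      (P.val * M * P⁻¹.val).BlockTriangular toDual := by
  induction n with
  | zero => exact ⟨1, fun i => Fin.elim0 i⟩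
  | succ n ih =>
    obtain ⟨P, hcol⟩ := exists_unit_conj_apply_castSucc_last_eq_zero M
    set M₁ := P.val * M * P⁻¹.val with hM₁
    obtain ⟨Q, hQ⟩ := ih (M₁.submatrix (Fin.castAdd 1) (Fin.castAdd 1))
    refine ⟨finFromBlocksUnits Q 1 * P, ?_⟩
    have hblocks : M₁ = finFromBlocks (M₁.submatrix (Fin.castAdd 1) (Fin.castAdd 1)) 0
        (M₁.submatrix (Fin.natAdd n) (Fin.castAdd 1))
        (M₁.submatrix (Fin.natAdd n) (Fin.natAdd n)) := by
      conv_lhs => rw [← finFromBlocks_submatrix M₁]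
      congr
      ext i j
      fin_cases j
      exact hcol i
    have hconj : (finFromBlocksUnits Q 1 * P).val * M * (finFromBlocksUnits Q 1 * P)⁻¹.val =
        finFromBlocks ↑Q 0 0 1 * M₁ * finFromBlocks ↑Q⁻¹ 0 0 1 := by
      rw [Units.val_mul, _root_.mul_inv_rev, Units.val_mul, val_finFromBlocksUnits,
        val_inv_finFromBlocksUnits, inv_one, Units.val_one, hM₁]
      simp only [Matrix.mul_assoc]
    rw [hconj, hblocks, finFromBlocks_mul, finFromBlocks_mul]
    simp only [Matrix.mul_zero, Matrix.zero_mul, add_zero, zero_add, Matrix.one_mul, Matrix.mul_one]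
    exact hQ.finFromBlocks_zero₁₂
      (fun i j hij => absurd hij (by rw [Subsingleton.elim i j]; exact lt_irrefl _)) _

end Bezout

end Matrix

theorem stmt4_general (R : Type*) [CommRing R] [IsDomain R] [IsBezout R]
    [IsAlgClosed (FractionRing R)]
    (n : ℕ) (M : Matrix (Fin n) (Fin n) R) (htr : M.trace = 0) :
    ∃ A B : Matrix (Fin n) (Fin n) R, M = A * B - B * A := by
  obtain ⟨P, hP⟩ := exists_unit_conj_blockTriangular_toDual M
  obtain ⟨A, B, hAB⟩ :=
    exists_eq_commutator_of_blockTriangular_toDual hP (by rw [trace_units_conj, htr])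
  refine ⟨P⁻¹.val * A * P.val, P⁻¹.val * B * P.val, ?_⟩
  calc M = P⁻¹.val * (P.val * M * P⁻¹.val) * P.val := by simp [Matrix.mul_assoc]
    _ = _ := by rw [hAB]; simp [Matrix.mul_sub, Matrix.sub_mul, Matrix.mul_assoc]

/-- Let `R` be a Bézout domain whose quotient field is algebraically closed. Then for
every `n ≥ 1`, every `n × n` trace-0 matrix over `R` is a commutator. -/
theorem stmt4 (R : Type*) [CommRing R] [IsDomain R] [IsBezout R]
    [IsAlgClosed (FractionRing R)]
    (n : ℕ) (hn : 1 ≤ n) (M : Matrix (Fin n) (Fin n) R) (htr : M.trace = 0) :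
    ∃ A B : Matrix (Fin n) (Fin n) R, M = A * B - B * A :=
  stmt4_general R n M htr
end

section
/- Let R be a commutative ring containing units r₁, …, rₙ such that rᵢ − rⱼ is a unit for all i ≠ j (a clique of exceptional units of size n). Then every hollow (n+1)×(n+1) matrix over R (one whose diagonal entries are all zero) is a commutator. -/
/-- Let `R` be a commutative ring with a clique of exceptional units `r 1, …, r n`
(units whose pairwise differences are units). Then every hollow `(n+1) × (n+1)`
matrix over `R` is a commutator. -/
theorem stmt6 (R : Type*) [CommRing R] (n : ℕ) (r : Fin n → Rˣ)
    (hr : ∀ i j : Fin n, i ≠ j → IsUnit ((r i : R) - (r j : R)))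
    (A : Matrix (Fin (n + 1)) (Fin (n + 1)) R) (hA : ∀ i, A i i = 0) :
    ∃ X Y : Matrix (Fin (n + 1)) (Fin (n + 1)) R, A = X * Y - Y * X := by
  set d : Fin (n + 1) → R := Fin.cons 0 (fun i => (r i : R)) with hd
  have hdu : ∀ i j : Fin (n + 1), i ≠ j → IsUnit (d i - d j) := by
    intro i j hij
    induction i using Fin.cases with
    | zero =>
      induction j using Fin.cases with
      | zero => exact absurd rfl hij
      | succ j =>
        simp only [hd, Fin.cons_zero, Fin.cons_succ, zero_sub]
        exact (r j).isUnit.neg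
    | succ i =>
      induction j using Fin.cases with
      | zero =>
        simp only [hd, Fin.cons_zero, Fin.cons_succ, sub_zero]
        exact (r i).isUnit
      | succ j =>
        simp only [hd, Fin.cons_succ]
        exact hr i j (fun h => hij (by rw [h]))
  refine ⟨Matrix.diagonal d,
    Matrix.of (fun i j => if h : i = j then 0 else ((hdu i j h).unit⁻¹ : Rˣ) * A i j), ?_⟩
  ext i j
  simp only [Matrix.sub_apply, Matrix.diagonal_mul, Matrix.mul_diagonal, Matrix.of_apply]
  by_cases h : i = j
  · subst h; simp [hA]
  · simp only [h, dite_false]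
    rw [mul_comm _ (d j), ← sub_mul, ← mul_assoc, (hdu i j h).mul_val_inv, one_mul]
end

section
/- Let k be a field and R a commutative k-algebra. Then for every integer n with 1 ≤ n ≤ |k| (cardinality of k), every hollow n×n matrix over R is a commutator. In particular, if k is infinite, every hollow matrix of any size over R is a commutator. -/
/-!
Taking the commutator with a diagonal matrix `D = diagonal d` scales entries:
`(D Y - Y D) i j = (d i - d j) Y i j`. If all differences `d i - d j` with `i ≠ j` are units,
a hollow `A` is therefore `D Y - Y D` with `Y i j = (d i - d j)⁻¹ A i j`. An injection
`Fin n ↪ k` provides such a `d`, since nonzero scalars of `k` are units of `R`.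
-/

namespace Matrix

variable {n R : Type*} [Fintype n] [DecidableEq n] [CommRing R]

theorem diagonal_mul_sub_mul_diagonal_apply (d : n → R) (Y : Matrix n n R) (i j : n) :
    (diagonal d * Y - Y * diagonal d) i j = (d i - d j) * Y i j := by
  rw [sub_apply, diagonal_mul, mul_diagonal]
  ring

-- `Ring.inverse 0 = 0`, so no case split on `i = j` is needed in the witness `Y`.
theorem exists_eq_commutator_of_isUnit_sub (d : n → R)
    (hd : Pairwise fun i j => IsUnit (d i - d j))
    (A : Matrix n n R) (hA : ∀ i, A i i = 0) :
    ∃ X Y : Matrix n n R, A = X * Y - Y * X := by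
  refine ⟨diagonal d, of fun i j => Ring.inverse (d i - d j) * A i j, ?_⟩
  ext i j
  rw [diagonal_mul_sub_mul_diagonal_apply, of_apply, ← mul_assoc]
  obtain rfl | hij := eq_or_ne i j
  · rw [hA, mul_zero]
  · rw [Ring.mul_inverse_cancel _ (hd hij), one_mul]

end Matrix

theorem stmt7_general (k : Type*) [Field k] (R : Type*) [CommRing R] [Algebra k R]
    (n : ℕ) (hcard : (n : Cardinal) ≤ Cardinal.mk k)
    (A : Matrix (Fin n) (Fin n) R) (hA : ∀ i, A i i = 0) :
    ∃ X Y : Matrix (Fin n) (Fin n) R, A = X * Y - Y * X := by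
  obtain ⟨c⟩ : Nonempty (Fin n ↪ k) :=
    Cardinal.lift_mk_le'.mp (by simpa using hcard)
  refine Matrix.exists_eq_commutator_of_isUnit_sub (fun i => algebraMap k R (c i))
    (fun i j hij => ?_) A hA
  dsimp only
  rw [← map_sub]
  exact (Ne.isUnit (sub_ne_zero.mpr (c.injective.ne hij))).map (algebraMap k R)

/-- Let `k` be a field and `R` a commutative `k`-algebra. Then for every integer `n`
with `1 ≤ n ≤ |k|`, every hollow `n × n` matrix over `R` is a commutator. -/
theorem stmt7 (k : Type*) [Field k] (R : Type*) [CommRing R] [Algebra k R]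
    (n : ℕ) (hn : 1 ≤ n) (hcard : (n : Cardinal) ≤ Cardinal.mk k)
    (A : Matrix (Fin n) (Fin n) R) (hA : ∀ i, A i i = 0) :
    ∃ X Y : Matrix (Fin n) (Fin n) R, A = X * Y - Y * X :=
  stmt7_general k R n hcard A hA
end

section
/- Let K be a field, m ≥ 3, and R = K[x₁, …, x_m] a polynomial ring. Then for every integer n with 2 ≤ n ≤ (m+1)/2, there exists a trace-0 matrix in Mat_n(R) that is not a commutator; explicitly, one may take the matrix X with first row (x₁, …, x_n), first column (x₁, x_{n+1}, …, x_{2n−1})ᵀ, entry (n,n) equal to −x₁, and all other entries 0. -/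
/-!
Reduce a relation `A = B * C - C * B` modulo the maximal ideal `(x₁, …, x_m)` and modulo its
square. Since `A` has no constant term, the constant parts `B₀, C₀` commute, and the coefficient
`A_k` of `x_k` in `A` equals `[B_k, C₀] + [B₀, C_k]`; hence `tr (A_k Y) = 0` for every
`Y ∈ Mat_n(K)` commuting with `B₀` and `C₀`. Each off-diagonal entry of the first row and column of
`X` is a distinct variable, so taking `Y = B₀, C₀` shows that both are block diagonal with respect
to `e₁`, i.e. they commute with `E₁₁`. But `Y = E₁₁` and the coefficient `E₁₁ - E_{nn}` of `x₁`
give `tr = 1`.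
-/

open Matrix MvPolynomial

namespace MvPolynomial

variable {R σ : Type*} [CommRing R]

noncomputable def linearCoeff (k : σ) : MvPolynomial σ R →+ R :=
  (constantCoeff : MvPolynomial σ R →+* R).toAddMonoidHom.comp (pderiv k).toAddMonoidHom

theorem linearCoeff_apply (k : σ) (p : MvPolynomial σ R) :
    linearCoeff k p = constantCoeff (pderiv k p) :=
  rfl

theorem linearCoeff_mul (k : σ) (p q : MvPolynomial σ R) :
    linearCoeff k (p * q) =
      linearCoeff k p * constantCoeff q + constantCoeff p * linearCoeff k q := by
  simp only [linearCoeff_apply, pderiv_mul, map_add, map_mul]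

theorem linearCoeff_X [DecidableEq σ] (k v : σ) :
    linearCoeff k (X v : MvPolynomial σ R) = if v = k then 1 else 0 := by
  simp [linearCoeff_apply, Pi.single_apply]

end MvPolynomial

namespace Matrix

variable {ι R σ : Type*} [Fintype ι] [CommRing R]

theorem trace_commutator_mul_eq_zero {X Z Y : Matrix ι ι R} (h : Commute Z Y) :
    trace ((X * Z - Z * X) * Y) = 0 := by
  rw [sub_mul, trace_sub, mul_assoc, h.eq, ← mul_assoc, trace_mul_cycle, mul_assoc, sub_self]

theorem map_linearCoeff_mul (k : σ) (M N : Matrix ι ι (MvPolynomial σ R)) :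
    (M * N).map (linearCoeff k) =
      M.map (linearCoeff k) * N.map constantCoeff + M.map constantCoeff * N.map (linearCoeff k) := by
  ext i j
  simp only [map_apply, mul_apply, add_apply, map_sum, linearCoeff_mul, Finset.sum_add_distrib]

theorem map_linearCoeff_commutator (k : σ) (B C : Matrix ι ι (MvPolynomial σ R)) :
    (B * C - C * B).map (linearCoeff k) =
      (B.map (linearCoeff k) * C.map constantCoeff - C.map constantCoeff * B.map (linearCoeff k))
      - (C.map (linearCoeff k) * B.map constantCoeff
        - B.map constantCoeff * C.map (linearCoeff k)) := by
  rw [Matrix.map_sub _ (map_sub _), map_linearCoeff_mul, map_linearCoeff_mul]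
  abel

theorem commute_map_constantCoeff {B C : Matrix ι ι (MvPolynomial σ R)}
    (h : (B * C - C * B).map constantCoeff = 0) :
    Commute (B.map constantCoeff) (C.map constantCoeff) := by
  rwa [Matrix.map_sub _ (map_sub _), Matrix.map_mul, Matrix.map_mul, sub_eq_zero] at h

theorem trace_map_linearCoeff_commutator_mul_eq_zero (k : σ)
    {B C : Matrix ι ι (MvPolynomial σ R)} {Y : Matrix ι ι R}
    (hB : Commute (B.map constantCoeff) Y) (hC : Commute (C.map constantCoeff) Y) :
    trace ((B * C - C * B).map (linearCoeff k) * Y) = 0 := by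
  rw [map_linearCoeff_commutator, sub_mul, trace_sub, trace_commutator_mul_eq_zero hC,
    trace_commutator_mul_eq_zero hB, sub_zero]

variable [DecidableEq ι]

theorem commute_single_self_of_row_col_eq_zero {a : ι} {M : Matrix ι ι R}
    (hcol : ∀ i, i ≠ a → M i a = 0) (hrow : ∀ i, i ≠ a → M a i = 0) :
    Commute (single a a 1) M := by
  ext i j
  by_cases hi : i = a <;> by_cases hj : j = a <;> simp_all

theorem not_exists_eq_commutator_of_map_linearCoeff [Nontrivial R]
    {A : Matrix ι ι (MvPolynomial σ R)} {a b : ι} (hab : a ≠ b)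
    (hconst : A.map constantCoeff = 0)
    (hrow : ∀ i, i ≠ a → ∃ k, A.map (linearCoeff k) = single a i 1)
    (hcol : ∀ i, i ≠ a → ∃ k, A.map (linearCoeff k) = single i a 1)
    (hdiag : ∃ k, A.map (linearCoeff k) = single a a 1 - single b b 1) :
    ¬ ∃ B C : Matrix ι ι (MvPolynomial σ R), A = B * C - C * B := by
  rintro ⟨B, C, rfl⟩
  have hBC := commute_map_constantCoeff hconst
  have hsingle : ∀ Y, Commute (B.map constantCoeff) Y → Commute (C.map constantCoeff) Y →
      Commute (single a a 1) Y := by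
    refine fun Y hB hC => commute_single_self_of_row_col_eq_zero (fun i hi => ?_) (fun i hi => ?_)
    · obtain ⟨k, hk⟩ := hrow i hi
      simpa [hk, trace_single_mul] using trace_map_linearCoeff_commutator_mul_eq_zero k hB hC
    · obtain ⟨k, hk⟩ := hcol i hi
      simpa [hk, trace_single_mul] using trace_map_linearCoeff_commutator_mul_eq_zero k hB hC
  obtain ⟨k, hk⟩ := hdiag
  have := trace_map_linearCoeff_commutator_mul_eq_zero k
    (hsingle _ (Commute.refl _) hBC.symm).symm (hsingle _ hBC (Commute.refl _)).symm
  simp [hk, sub_mul, trace_single_mul, hab] at this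

end Matrix

section HookMatrix

variable (R : Type*) [CommRing R] {m n : ℕ} (hnm : 2 * n ≤ m + 1)

/-- The matrix `X` of the statement, with rows, columns and variables indexed from `0`. -/
noncomputable def hookMatrix : Matrix (Fin n) (Fin n) (MvPolynomial (Fin m) R) :=
  of fun i j : Fin n =>
    if (i : ℕ) = 0 then X ⟨j, by omega⟩
    else if (j : ℕ) = 0 then X ⟨n - 1 + i, by omega⟩
    else if (i : ℕ) = n - 1 ∧ (j : ℕ) = n - 1 then -X ⟨0, by have := i.isLt; omega⟩
    else 0

variable {R}

theorem trace_hookMatrix (hn : 2 ≤ n) : (hookMatrix R hnm).trace = 0 := by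
  rw [trace, Finset.sum_eq_add (⟨0, by omega⟩ : Fin n) ⟨n - 1, by omega⟩]
  · simp [hookMatrix, show n - 1 ≠ 0 by omega]
  · simp [Fin.ext_iff]; omega
  · intro i _ hi
    simp only [ne_eq, Fin.ext_iff] at hi
    simp [hookMatrix, hi.1, hi.2]
  · simp
  · simp

theorem map_constantCoeff_hookMatrix : (hookMatrix R hnm).map constantCoeff = 0 := by
  ext i j
  simp only [hookMatrix, map_apply, of_apply]
  split_ifs <;> simp

theorem map_linearCoeff_hookMatrix_row (hn : 2 ≤ n) (j : Fin n) (hj : j ≠ ⟨0, by omega⟩) :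
    (hookMatrix R hnm).map (linearCoeff ⟨j, by omega⟩) = single ⟨0, by omega⟩ j 1 := by
  replace hj : (j : ℕ) ≠ 0 := fun h => hj (Fin.ext h)
  ext a b
  simp only [hookMatrix, map_apply, of_apply, single_apply, Fin.ext_iff]
  split_ifs <;> simp [linearCoeff_X, Fin.ext_iff] <;> omega

theorem map_linearCoeff_hookMatrix_col (hn : 2 ≤ n) (i : Fin n) (hi : i ≠ ⟨0, by omega⟩) :
    (hookMatrix R hnm).map (linearCoeff ⟨n - 1 + i, by omega⟩) = single i ⟨0, by omega⟩ 1 := by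
  replace hi : (i : ℕ) ≠ 0 := fun h => hi (Fin.ext h)
  ext a b
  simp only [hookMatrix, map_apply, of_apply, single_apply, Fin.ext_iff]
  split_ifs <;> simp [linearCoeff_X, Fin.ext_iff] <;> omega

theorem map_linearCoeff_hookMatrix_diag (hn : 2 ≤ n) :
    (hookMatrix R hnm).map (linearCoeff ⟨0, by omega⟩) =
      single ⟨0, by omega⟩ ⟨0, by omega⟩ 1 - single ⟨n - 1, by omega⟩ ⟨n - 1, by omega⟩ 1 := by
  ext a b
  simp only [hookMatrix, map_apply, of_apply, Matrix.sub_apply, single_apply, Fin.ext_iff]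
  split_ifs <;> simp [linearCoeff_X, Fin.ext_iff] <;> omega

theorem not_exists_hookMatrix_eq_commutator [Nontrivial R] (hn : 2 ≤ n) :
    ¬ ∃ B C : Matrix (Fin n) (Fin n) (MvPolynomial (Fin m) R),
      hookMatrix R hnm = B * C - C * B :=
  not_exists_eq_commutator_of_map_linearCoeff (b := ⟨n - 1, by omega⟩)
    (by simp [Fin.ext_iff]; omega) (map_constantCoeff_hookMatrix hnm)
    (fun j hj => ⟨_, map_linearCoeff_hookMatrix_row hnm hn j hj⟩)
    (fun i hi => ⟨_, map_linearCoeff_hookMatrix_col hnm hn i hi⟩)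
    ⟨_, map_linearCoeff_hookMatrix_diag hnm hn⟩

end HookMatrix

/-- Let `K` be a field, `m ≥ 3`, `R = K[x_1, …, x_m]`, and `n` with `2 ≤ n ≤ (m+1)/2`.
Then the matrix with first row `(x_1, …, x_n)`, first column `(x_1, x_{n+1}, …, x_{2n-1})ᵀ`,
entry `(n,n)` equal to `−x_1`, and all other entries `0` (variables being 0-indexed below),
is a trace-0 matrix in `Mat_n(R)` that is not a commutator. -/
theorem stmt10 (K : Type*) [Field K] (m : ℕ)
    (n : ℕ) (hn : 2 ≤ n) (hnm : 2 * n ≤ m + 1)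
    (A : Matrix (Fin n) (Fin n) (MvPolynomial (Fin m) K))
    (hA : A = Matrix.of fun i j : Fin n =>
      if (i : ℕ) = 0 then MvPolynomial.X ⟨(j : ℕ), by omega⟩
      else if (j : ℕ) = 0 then MvPolynomial.X ⟨n - 1 + (i : ℕ), by omega⟩
      else if (i : ℕ) = n - 1 ∧ (j : ℕ) = n - 1 then - MvPolynomial.X ⟨0, by omega⟩
      else 0) :
    A.trace = 0 ∧
      ¬ ∃ B C : Matrix (Fin n) (Fin n) (MvPolynomial (Fin m) K), A = B * C - C * B := by
  obtain rfl : A = hookMatrix K hnm := hA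
  exact ⟨trace_hookMatrix hnm hn, not_exists_hookMatrix_eq_commutator hnm hn⟩
end

section
/- For m = 3 and any d ≥ 0, any two distinct points s, s' in Δ(2, 2d+1) = {v ∈ ℤ_{≥0}³ : v₁+v₂+v₃ = 2d+1} with all coordinates at most d satisfy |s − s'|₁ ≤ 2d. Consequently, the largest 2d-separated subset of Δ(2, 2d+1) has at most 4 elements. -/
lemma dist_le_of_coord (d : ℕ) (v w : Fin 3 → ℕ)
    (hv : ∑ j, v j = 2 * d + 1) (hw : ∑ j, w j = 2 * d + 1)
    (j : Fin 3) (h1 : d < v j) (h2 : d < w j) :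
    ∑ j, Nat.dist (v j) (w j) ≤ 2 * d := by
  simp only [Fin.sum_univ_three, Nat.dist] at *
  fin_cases j <;> simp at h1 h2 <;> omega

/-- For `m = 3` and any `d ≥ 0`: (i) any two distinct points of
`Δ(2, 2d+1) = {v ∈ ℤ_{≥0}³ : v₁+v₂+v₃ = 2d+1}` with all coordinates at most `d` are at
ℓ¹-distance at most `2d`; (ii) consequently any `2d`-separated subset of `Δ(2, 2d+1)`
has at most `4` elements. -/
theorem stmt12 (d : ℕ) :
    (∀ s s' : Fin 3 → ℕ, (∑ j, s j = 2 * d + 1) → (∑ j, s' j = 2 * d + 1) →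
      (∀ j, s j ≤ d) → (∀ j, s' j ≤ d) → s ≠ s' →
      ∑ j, Nat.dist (s j) (s' j) ≤ 2 * d) ∧
    (∀ S : Finset (Fin 3 → ℕ),
      (∀ v ∈ S, ∑ j, v j = 2 * d + 1) →
      (∀ v ∈ S, ∀ w ∈ S, v ≠ w → 2 * d < ∑ j, Nat.dist (v j) (w j)) →
      S.card ≤ 4) := by
  have part1 : ∀ s s' : Fin 3 → ℕ, (∑ j, s j = 2 * d + 1) → (∑ j, s' j = 2 * d + 1) →
      (∀ j, s j ≤ d) → (∀ j, s' j ≤ d) →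
      ∑ j, Nat.dist (s j) (s' j) ≤ 2 * d := by
    intro s s' hs hs' hb hb'
    have h0 := hb 0; have h1 := hb 1; have h2 := hb 2
    have h0' := hb' 0; have h1' := hb' 1; have h2' := hb' 2
    simp only [Fin.sum_univ_three, Nat.dist] at *
    omega
  refine ⟨fun s s' hs hs' hb hb' _ => part1 s s' hs hs' hb hb', ?_⟩
  intro S hsum hsep
  have : S.card ≤ (Finset.univ : Finset (Option (Fin 3))).card := by
    apply Finset.card_le_card_of_injOn
      (fun v => if h : ∃ j, d < v j then some h.choose else none)
    · intro v _; exact Finset.mem_univ _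
    · intro v hv w hw heq
      by_contra hne
      have hlt := hsep v hv w hw hne
      by_cases h1 : ∃ j, d < v j
      · by_cases h2 : ∃ j, d < w j
        · simp only [dif_pos h1, dif_pos h2, Option.some_inj] at heq
          have := dist_le_of_coord d v w (hsum v hv) (hsum w hw) h1.choose
            h1.choose_spec (heq ▸ h2.choose_spec)
          omega
        · simp [dif_pos h1, dif_neg h2] at heq
      · by_cases h2 : ∃ j, d < w j
        · simp [dif_neg h1, dif_pos h2] at heq
        · push_neg at h1 h2
          have := part1 v w (hsum v hv) (hsum w hw) h1 h2
          omega
  simpa using this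
end

section
/- Let m ≥ 1, d ≥ 0, and suppose S is a subset of Δ(m−1, 2d+1) ⊆ ℤ_{≥0}^m that is 2d-separated. Then |S| ≤ 4^{m−1}. -/
/-!
A discrete version of the volume-packing argument. Translating each point of `S` by all points of
`Δ(m−1, d)` gives translates that are pairwise disjoint (two points of `S` hit by a common
translate are at ℓ¹-distance at most `2d`) and that all lie in `Δ(m−1, 3d+1)`. Hence
`|S| · C(m−1+d, m−1) ≤ C(m−1+3d+1, m−1)`, and the ratio of these binomial coefficients is at most
`3^{m−1}`, as each of its factors `(3d+1+i)/(d+i)` is at most `3`.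
-/

open Finset

theorem Finset.card_piAntidiag_univ_nat_eq_choose {ι : Type*} [Fintype ι] [DecidableEq ι] (n : ℕ) :
    #((univ : Finset ι).piAntidiag n) = (Fintype.card ι + n - 1).choose n := by
  rw [← Sym.card_sym_eq_choose]
  exact card_eq_of_equiv_fintype <|
    (Equiv.subtypeEquivRight fun f => by simp).trans (Sym.equivNatSumOfFintype ι n).symm

theorem Nat.choose_add_le_pow_mul_choose {c d e : ℕ} (h : e + 1 ≤ c * (d + 1)) (k : ℕ) :
    (k + e).choose k ≤ c ^ k * (k + d).choose k := by
  induction k with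
  | zero => simp
  | succ k ih =>
    have hc : k + e + 1 ≤ c * (k + d + 1) := by
      obtain _ | c := c
      · simp at h
      · nlinarith
    refine Nat.le_of_mul_le_mul_right ?_ k.succ_pos
    calc (k + 1 + e).choose (k + 1) * (k + 1) = (k + e + 1) * (k + e).choose k := by
          rw [Nat.add_one_mul_choose_eq, Nat.add_right_comm]
      _ ≤ c * (k + d + 1) * (c ^ k * (k + d).choose k) := Nat.mul_le_mul hc ih
      _ = c ^ (k + 1) * ((k + d + 1) * (k + d).choose k) := by ring
      _ = c ^ (k + 1) * (k + 1 + d).choose (k + 1) * (k + 1) := by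
          rw [Nat.add_one_mul_choose_eq, Nat.add_right_comm, mul_assoc]

theorem sum_dist_le_of_add_eq_add {ι : Type*} [Fintype ι] {v w c c' : ι → ℕ}
    (h : v + c = w + c') : ∑ i, Nat.dist (v i) (w i) ≤ ∑ i, c i + ∑ i, c' i := by
  rw [← sum_add_distrib]
  refine sum_le_sum fun i _ => ?_
  have := congrFun h i
  simp only [Pi.add_apply] at this
  unfold Nat.dist
  omega

theorem card_mul_card_piAntidiag_le_of_separated {ι : Type*} [Fintype ι] [DecidableEq ι]
    {S : Finset (ι → ℕ)} {r d : ℕ} (hS : ∀ v ∈ S, ∑ i, v i = r)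
    (hsep : ∀ v ∈ S, ∀ w ∈ S, v ≠ w → 2 * d < ∑ i, Nat.dist (v i) (w i)) :
    #S * #((univ : Finset ι).piAntidiag d) ≤ #((univ : Finset ι).piAntidiag (r + d)) := by
  rw [← card_product]
  refine card_le_card_of_injOn (fun p => p.1 + p.2) ?_ ?_
  · rintro ⟨v, c⟩ hvc
    simp only [coe_product, Set.mem_prod, mem_coe, mem_piAntidiag] at hvc ⊢
    simp [sum_add_distrib, hS v hvc.1, hvc.2.1]
  · rintro ⟨v, c⟩ hvc ⟨w, c'⟩ hwc (h : v + c = w + c')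
    simp only [coe_product, Set.mem_prod, mem_coe, mem_piAntidiag] at hvc hwc
    obtain rfl : v = w := by
      by_contra hvw
      have hc : ∑ i, c i = d := hvc.2.1
      have hc' : ∑ i, c' i = d := hwc.2.1
      have hclose := sum_dist_le_of_add_eq_add h
      have hfar := hsep v hvc.1 w hwc.1 hvw
      omega
    rw [add_right_injective v h]

theorem stmt13_general (m d : ℕ) (S : Finset (Fin m → ℕ))
    (hS : ∀ v ∈ S, ∑ j, v j = 2 * d + 1)
    (hsep : ∀ v ∈ S, ∀ w ∈ S, v ≠ w → 2 * d < ∑ j, Nat.dist (v j) (w j)) :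
    S.card ≤ 4 ^ (m - 1) := by
  rcases m with _ | k
  · simpa using card_le_one_of_subsingleton S
  have hpack := card_mul_card_piAntidiag_le_of_separated hS hsep
  simp only [card_piAntidiag_univ_nat_eq_choose, Fintype.card_fin, Nat.add_right_comm k 1,
    Nat.add_sub_cancel] at hpack
  have hbinom : (k + (2 * d + 1 + d)).choose k ≤ 3 ^ k * (k + d).choose k :=
    Nat.choose_add_le_pow_mul_choose (by omega) k
  rw [Nat.choose_symm_add, Nat.choose_symm_add] at hbinom
  have h3 : #S ≤ 3 ^ k :=
    Nat.le_of_mul_le_mul_right (hpack.trans hbinom) (Nat.choose_pos (by omega))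
  calc #S ≤ 3 ^ k := h3
    _ ≤ 4 ^ (k + 1 - 1) := Nat.pow_le_pow_left (by norm_num) k

/-- Let `m ≥ 1`, `d ≥ 0`, and let `S ⊆ Δ(m−1, 2d+1) ⊆ ℤ_{≥0}^m` be `2d`-separated
(distinct points at ℓ¹-distance strictly greater than `2d`). Then `|S| ≤ 4^{m−1}`. -/
theorem stmt13 (m d : ℕ) (hm : 1 ≤ m) (S : Finset (Fin m → ℕ))
    (hS : ∀ v ∈ S, ∑ j, v j = 2 * d + 1)
    (hsep : ∀ v ∈ S, ∀ w ∈ S, v ≠ w → 2 * d < ∑ j, Nat.dist (v j) (w j)) :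
    S.card ≤ 4 ^ (m - 1) :=
  stmt13_general m d S hS hsep
end

section
/- Let m ≥ 1 and let Δ_{m−1} = {v ∈ ℝ^m : vᵢ ≥ 0 for all i, Σᵢ vᵢ = 1}. If S ⊆ Δ_{m−1} satisfies |s − s'|₁ > 1 for all distinct s, s' ∈ S, then |S| ≤ 4^{m−1}. -/
open scoped BigOperators
open MeasureTheory Set
open scoped ENNReal Pointwise

/-- Let `m ≥ 1` and `Δ_{m−1} = {v ∈ ℝ^m : v i ≥ 0, Σ v i = 1}`. If `S ⊆ Δ_{m−1}`
is `1`-separated in the ℓ¹-norm, then `S` is finite with `|S| ≤ 4^{m−1}`. -/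
theorem stmt14 (m : ℕ) (hm : 1 ≤ m) (S : Set (Fin m → ℝ))
    (hS : ∀ s ∈ S, (∀ i, 0 ≤ s i) ∧ ∑ i, s i = 1)
    (hsep : ∀ s ∈ S, ∀ s' ∈ S, s ≠ s' → 1 < ∑ i, |s i - s' i|) :
    S.Finite ∧ S.ncard ≤ 4 ^ (m - 1) := by
  classical
  obtain ⟨n, rfl⟩ : ∃ n, m = n + 1 := ⟨m - 1, (Nat.succ_pred_eq_of_pos hm).symm⟩
  simp only [Nat.add_sub_cancel]
  set Δ : Set (Fin n → ℝ) := {u | (∀ i, 0 ≤ u i) ∧ ∑ i, u i ≤ 1} with hΔdef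
  have hΔsub : Δ ⊆ Set.Icc 0 1 := by
    rintro u ⟨h0, h1⟩
    refine ⟨fun i => h0 i, fun i => ?_⟩
    calc u i ≤ ∑ j, u j := Finset.single_le_sum (fun j _ => h0 j) (Finset.mem_univ i)
      _ ≤ 1 := h1
  have hΔclosed : IsClosed Δ := by
    have he : Δ = (⋂ i, {u : Fin n → ℝ | 0 ≤ u i}) ∩ {u | ∑ i, u i ≤ 1} := by
      ext u; simp [hΔdef, Set.mem_iInter]
    rw [he]
    exact (isClosed_iInter fun i => isClosed_le continuous_const (continuous_apply i)).inter
      (isClosed_le (by fun_prop) continuous_const)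
  have hΔcomp : IsCompact Δ :=
    (isCompact_Icc).of_isClosed_subset hΔclosed hΔsub
  have hΔpos : 0 < volume Δ := by
    have hO : IsOpen {u : Fin n → ℝ | (∀ i, 0 < u i) ∧ ∑ i, u i < 1} := by
      have he : {u : Fin n → ℝ | (∀ i, 0 < u i) ∧ ∑ i, u i < 1} =
          (⋂ i, {u : Fin n → ℝ | 0 < u i}) ∩ {u | ∑ i, u i < 1} := by
        ext u; simp [Set.mem_iInter]
      rw [he]
      exact (isOpen_iInter_of_finite fun i =>
          isOpen_lt continuous_const (continuous_apply i)).inter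
        (isOpen_lt (by fun_prop) continuous_const)
    have hne : {u : Fin n → ℝ | (∀ i, 0 < u i) ∧ ∑ i, u i < 1}.Nonempty := by
      refine ⟨fun _ => 1 / (2 * (n + 1)), fun i => by positivity, ?_⟩
      rw [Finset.sum_const, Finset.card_univ, Fintype.card_fin, nsmul_eq_mul]
      rw [mul_one_div, div_lt_one (by positivity)]
      have : (0:ℝ) ≤ n := Nat.cast_nonneg n
      linarith
    calc (0:ℝ≥0∞) < volume {u : Fin n → ℝ | (∀ i, 0 < u i) ∧ ∑ i, u i < 1} :=
          hO.measure_pos volume hne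
      _ ≤ volume Δ := measure_mono (fun u hu => ⟨fun i => (hu.1 i).le, hu.2.le⟩)
  set t : (Fin (n+1) → ℝ) → (Fin n → ℝ) := fun s i => (3/4) * s i.castSucc with ht
  set A : (Fin (n+1) → ℝ) → Set (Fin n → ℝ) :=
    fun s => (fun u => t s + (1/4 : ℝ) • u) '' Δ with hA
  have hAvol : ∀ s, volume (A s) = ENNReal.ofReal ((1/4 : ℝ)^n) * volume Δ := by
    intro s
    have he : A s = t s +ᵥ ((1/4 : ℝ) • Δ) := by
      ext x
      simp only [hA, Set.mem_image, Set.mem_vadd_set, Set.mem_smul_set]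
      constructor
      · rintro ⟨u, hu, rfl⟩; exact ⟨(1/4:ℝ) • u, ⟨u, hu, rfl⟩, rfl⟩
      · rintro ⟨y, ⟨u, hu, rfl⟩, rfl⟩; exact ⟨u, hu, rfl⟩
    rw [he, measure_vadd, Measure.addHaar_smul_of_nonneg volume (by norm_num : (0:ℝ) ≤ 1/4),
      Module.finrank_fin_fun]
  have hAsub : ∀ s ∈ S, A s ⊆ Δ := by
    rintro s hs x ⟨u, hu, rfl⟩
    obtain ⟨hs0, hs1⟩ := hS s hs
    obtain ⟨hu0, hu1⟩ := hu
    have hcs : ∑ i : Fin n, s i.castSucc ≤ 1 := by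
      have hsum : ∑ i : Fin n, s i.castSucc + s (Fin.last n) = 1 := by
        rw [← Fin.sum_univ_castSucc]; exact hs1
      have := hs0 (Fin.last n)
      linarith
    constructor
    · intro i
      have h1 := hs0 i.castSucc
      have h2 := hu0 i
      simp only [Pi.add_apply, Pi.smul_apply, smul_eq_mul, ht]
      nlinarith
    · have heq : ∑ i, (t s + (1/4:ℝ) • u) i
          = (3/4) * ∑ i : Fin n, s i.castSucc + (1/4) * ∑ i, u i := by
        simp only [Pi.add_apply, Pi.smul_apply, smul_eq_mul, ht]
        rw [Finset.sum_add_distrib, Finset.mul_sum, Finset.mul_sum]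
      rw [heq]; nlinarith
  have hdisj : ∀ s ∈ S, ∀ s' ∈ S, s ≠ s' → Disjoint (A s) (A s') := by
    intro s hs s' hs' hne
    rw [Set.disjoint_left]
    rintro x ⟨u, hu, hxu⟩ ⟨u', hu', hxu'⟩
    obtain ⟨hs0, hs1⟩ := hS s hs
    obtain ⟨hs0', hs1'⟩ := hS s' hs'
    obtain ⟨hu0, husum⟩ := hu
    obtain ⟨hu0', husum'⟩ := hu'
    have hu0s : 0 ≤ ∑ i, u i := Finset.sum_nonneg fun i _ => hu0 i
    have hu0s' : 0 ≤ ∑ i, u' i := Finset.sum_nonneg fun i _ => hu0' i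
    have hcoord : ∀ i : Fin n, s i.castSucc - s' i.castSucc = (1/3) * (u' i - u i) := by
      intro i
      have e1 := congrFun hxu i
      have e2 := congrFun hxu' i
      simp only [Pi.add_apply, Pi.smul_apply, smul_eq_mul, ht] at e1 e2
      have : (3/4:ℝ) * s i.castSucc + (1/4) * u i
          = (3/4) * s' i.castSucc + (1/4) * u' i := by rw [e1, e2]
      linarith
    have hlast : s (Fin.last n) - s' (Fin.last n) = (1/3) * (∑ i, u i - ∑ i, u' i) := by
      have h1 : ∑ i : Fin n, s i.castSucc + s (Fin.last n) = 1 := by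
        rw [← Fin.sum_univ_castSucc]; exact hs1
      have h2 : ∑ i : Fin n, s' i.castSucc + s' (Fin.last n) = 1 := by
        rw [← Fin.sum_univ_castSucc]; exact hs1'
      have h3 : ∑ i : Fin n, s i.castSucc - ∑ i : Fin n, s' i.castSucc
          = (1/3) * (∑ i, u' i - ∑ i, u i) := by
        rw [← Finset.sum_sub_distrib]
        simp_rw [hcoord]
        rw [← Finset.mul_sum, Finset.sum_sub_distrib]
      linarith
    have hbound : ∑ i, |s i - s' i| ≤ 1 := by
      rw [Fin.sum_univ_castSucc]
      have hterm : ∀ i : Fin n, |s i.castSucc - s' i.castSucc| ≤ (1/3) * (u i + u' i) := by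
        intro i
        rw [hcoord i, abs_mul, abs_of_pos (by norm_num : (0:ℝ) < 1/3)]
        have h1 := hu0 i
        have h2 := hu0' i
        have : |u' i - u i| ≤ u i + u' i := abs_le.mpr ⟨by linarith, by linarith⟩
        linarith
      have hlastb : |s (Fin.last n) - s' (Fin.last n)| ≤ 1/3 := by
        rw [hlast, abs_mul, abs_of_pos (by norm_num : (0:ℝ) < 1/3)]
        have : |∑ i, u i - ∑ i, u' i| ≤ 1 := abs_le.mpr ⟨by linarith, by linarith⟩
        linarith
      have hsumb : ∑ i : Fin n, |s i.castSucc - s' i.castSucc|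
          ≤ (1/3) * (∑ i, u i + ∑ i, u' i) := by
        calc ∑ i : Fin n, |s i.castSucc - s' i.castSucc|
            ≤ ∑ i : Fin n, (1/3) * (u i + u' i) :=
              Finset.sum_le_sum fun i _ => hterm i
          _ = (1/3) * (∑ i, u i + ∑ i, u' i) := by
              rw [← Finset.mul_sum, Finset.sum_add_distrib]
      linarith
    exact absurd (hsep s hs s' hs' hne) (not_lt.mpr hbound)
  have hAmeas : ∀ s, MeasurableSet (A s) := fun s =>
    ((hΔcomp.image (by fun_prop)).isClosed).measurableSet
  have key : ∀ F : Finset (Fin (n+1) → ℝ), ↑F ⊆ S → F.card ≤ 4 ^ n := by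
    intro F hF
    have hunion : volume (⋃ s ∈ F, A s) = ∑ s ∈ F, volume (A s) :=
      measure_biUnion_finset
        (fun s hsF s' hs'F hne => hdisj s (hF hsF) s' (hF hs'F) hne)
        (fun s _ => hAmeas s)
    have hle : ∑ s ∈ F, volume (A s) ≤ volume Δ := by
      rw [← hunion]
      exact measure_mono (Set.iUnion₂_subset fun s hsF => hAsub s (hF hsF))
    rw [Finset.sum_congr rfl (fun s _ => hAvol s), Finset.sum_const, nsmul_eq_mul] at hle
    have hv0 : volume Δ ≠ 0 := hΔpos.ne'
    have hvt : volume Δ ≠ ⊤ := hΔcomp.measure_lt_top.ne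
    have h2 : (F.card : ℝ≥0∞) * ENNReal.ofReal ((1/4:ℝ)^n) ≤ 1 := by
      rw [← ENNReal.mul_le_mul_iff_left hv0 hvt, one_mul, mul_assoc]
      exact hle
    have ha : (ENNReal.ofReal ((4:ℝ)^n)) * ENNReal.ofReal ((1/4:ℝ)^n) = 1 := by
      rw [← ENNReal.ofReal_mul (by positivity), ← mul_pow]
      norm_num
    have h3 : (F.card : ℝ≥0∞) ≤ ENNReal.ofReal ((4:ℝ)^n) := by
      calc (F.card : ℝ≥0∞) = ENNReal.ofReal ((4:ℝ)^n) *
            ((F.card : ℝ≥0∞) * ENNReal.ofReal ((1/4:ℝ)^n)) := by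
            rw [← mul_assoc, mul_comm (ENNReal.ofReal ((4:ℝ)^n)) (F.card : ℝ≥0∞),
              mul_assoc, ha, mul_one]
        _ ≤ ENNReal.ofReal ((4:ℝ)^n) * 1 := by gcongr
        _ = ENNReal.ofReal ((4:ℝ)^n) := mul_one _
    have h4 : ENNReal.ofReal ((4:ℝ)^n) = ((4^n : ℕ) : ℝ≥0∞) := by
      rw [ENNReal.ofReal_pow (by norm_num)]
      norm_num
    rw [h4] at h3
    exact_mod_cast h3
  have hfin : S.Finite := by
    by_contra hinf
    obtain ⟨T, hTS, hTfin, hTcard⟩ :=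
      Set.Infinite.exists_subset_ncard_eq hinf (4^n + 1)
    have h := key hTfin.toFinset (by simpa using hTS)
    rw [← Set.ncard_eq_toFinset_card T hTfin] at h
    omega
  refine ⟨hfin, ?_⟩
  have h := key hfin.toFinset (by simp)
  rwa [← Set.ncard_eq_toFinset_card S hfin] at h
end

section
/- Let m be a positive integer. For every d ≥ m−1 there exists a 2d-separated subset S of Δ(m−1, 2d+1) ⊆ ℤ_{≥0}^m with |S| = m(m+2)/4 if m is even, and |S| = (m+1)²/4 if m is odd. -/
/-!
For `v, w` with the same coordinate sum `s`, `‖v - w‖₁ = 2s - 2 ∑ᵢ min(vᵢ, wᵢ)`, so inside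
`Δ(m-1, 2d+1)` being `2d`-separated means that any two points overlap, `∑ᵢ min(vᵢ, wᵢ)`, in at
most `d`. Every entry of a non-corner point is at most `d`, which handles the corners. Two
distinct non-corner points live on the progressions `k, k+j, k+2j` and `k', k'+j', k'+2j'`, which
share at most two positions, and only when `j' = j` or one step is twice the other; in those
cases the shared entries are a first and a last entry whose sum is at most `d`. For
`j' = 2j, k' = k` this is exactly `ord₂(2j) = ord₂(j) + 1`. Finally there are
`∑_{j<m} (m - 2j)₊ = ⌊(m+1)²/4⌋` points.
-/

open Finset

lemma Nat.dist_add_two_mul_min (a b : ℕ) : Nat.dist a b + 2 * min a b = a + b := by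
  unfold Nat.dist; omega

lemma sum_dist_add_two_mul_sum_min {ι : Type*} (s : Finset ι) (f g : ι → ℕ) :
    ∑ i ∈ s, Nat.dist (f i) (g i) + 2 * ∑ i ∈ s, min (f i) (g i) =
      ∑ i ∈ s, f i + ∑ i ∈ s, g i := by
  rw [mul_sum, ← sum_add_distrib, ← sum_add_distrib]
  exact sum_congr rfl fun i _ => Nat.dist_add_two_mul_min (f i) (g i)

lemma sum_min_le_of_support_subset {ι : Type*} {s t : Finset ι} {f : ι → ℕ} (g : ι → ℕ)
    (ht : ∀ i, f i ≠ 0 → i ∈ t) : ∑ i ∈ s, min (f i) (g i) ≤ ∑ i ∈ t, min (f i) (g i) :=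
  sum_le_sum_of_ne_zero fun i _ h => ht i fun hf => h (by simp [hf])

lemma exists_separated_finset_of_sum_min_le {ι : Type*} (m d : ℕ) (T : Finset ι) (F : ι → ℕ → ℕ)
    (hsum : ∀ p ∈ T, ∑ i ∈ range m, F p i = 2 * d + 1)
    (hmin : ∀ p ∈ T, ∀ q ∈ T, p ≠ q → ∑ i ∈ range m, min (F p i) (F q i) ≤ d) :
    ∃ S : Finset (Fin m → ℕ),
      (∀ v ∈ S, ∑ j, v j = 2 * d + 1) ∧
      (∀ v ∈ S, ∀ w ∈ S, v ≠ w → 2 * d < ∑ j, Nat.dist (v j) (w j)) ∧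
      S.card = T.card := by
  classical
  set G : ι → Fin m → ℕ := fun p i => F p i
  have hsep : ∀ p ∈ T, ∀ q ∈ T, p ≠ q → 2 * d < ∑ j, Nat.dist (G p j) (G q j) := by
    intro p hp q hq hpq
    have hdist := sum_dist_add_two_mul_sum_min (range m) (F p) (F q)
    rw [Fin.sum_univ_eq_sum_range (fun i => Nat.dist (F p i) (F q i))]
    have hpq' := hmin p hp q hq hpq
    have hp' := hsum p hp
    have hq' := hsum q hq
    omega
  have hinj : Set.InjOn G T := fun p hp q hq hpq => by
    by_contra hne
    simpa [hpq] using hsep p hp q hq hne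
  refine ⟨T.image G, ?_, ?_, card_image_of_injOn hinj⟩
  · simp only [forall_mem_image]
    intro p hp
    rw [Fin.sum_univ_eq_sum_range (F p)]
    exact hsum p hp
  · simp only [forall_mem_image]
    intro p hp q hq hne
    exact hsep p hp q hq (fun h => hne (h ▸ rfl))

lemma sum_range_sub_two_mul (m : ℕ) : ∑ j ∈ range m, (m - 2 * j) = (m + 1) ^ 2 / 4 := by
  induction m using Nat.twoStepInduction with
  | zero => rfl
  | one => rfl
  | more n ih _ =>
    have hshift : ∑ j ∈ range (n + 1), (n + 2 - 2 * (j + 1)) = ∑ j ∈ range n, (n - 2 * j) := by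
      rw [sum_range_succ, Nat.sub_eq_zero_of_le (by omega), add_zero]
      exact sum_congr rfl fun j _ => by omega
    have hsq : (n + 2 + 1) ^ 2 = (n + 1) ^ 2 + (n + 2) * 4 := by ring
    rw [sum_range_succ', hshift, ih, hsq, Nat.add_mul_div_right _ _ (by norm_num)]
    omega

lemma ite_even_mul_div_four_eq_sq_div_four (m : ℕ) :
    (if Even m then m * (m + 2) / 4 else (m + 1) ^ 2 / 4) = (m + 1) ^ 2 / 4 := by
  split_ifs with hm
  · obtain ⟨a, rfl⟩ := hm
    have h1 : (a + a) * (a + a + 2) = 4 * (a * a + a) := by ring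
    have h2 : (a + a + 1) ^ 2 = 4 * (a * a + a) + 1 := by ring
    omega
  · rfl

section Construction

variable {d j k j' k' : ℕ}

def triplePoint (d j k : ℕ) : ℕ → ℕ :=
  Pi.single k (d - (padicValNat 2 j + k + 1)) + Pi.single (k + j) d +
    Pi.single (k + 2 * j) (padicValNat 2 j + k + 2)

/-- The point indexed by `(j, k)`: the corner `(2d+1)·e_k` for `j = 0`, and otherwise the paper's
point for `j` and `k + 1` (positions here are `0`-based). -/
def simplexPoint (d j k : ℕ) : ℕ → ℕ :=
  if j = 0 then Pi.single k (2 * d + 1) else triplePoint d j k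

lemma padicValNat_two_add_le (hj : j ≠ 0) (hk : k + 2 * j ≤ d) :
    padicValNat 2 j + k + 2 ≤ d := by
  have := Nat.padicValNat_lt_self (p := 2) hj
  omega

lemma triplePoint_apply (hj : j ≠ 0) (i : ℕ) : triplePoint d j k i =
    if i = k then d - (padicValNat 2 j + k + 1) else if i = k + j then d
    else if i = k + 2 * j then padicValNat 2 j + k + 2 else 0 := by
  simp only [triplePoint, Pi.add_apply, Pi.single_apply]
  split_ifs <;> omega

lemma triplePoint_le (hj : j ≠ 0) (hk : k + 2 * j ≤ d) (i : ℕ) : triplePoint d j k i ≤ d := by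
  have := padicValNat_two_add_le hj hk
  rw [triplePoint_apply hj]
  split_ifs <;> omega

lemma sum_triplePoint {m : ℕ} (hj : j ≠ 0) (hkm : k + 2 * j < m) (hk : k + 2 * j ≤ d) :
    ∑ i ∈ range m, triplePoint d j k i = 2 * d + 1 := by
  have := padicValNat_two_add_le hj hk
  simp only [triplePoint, Pi.add_apply, sum_add_distrib, sum_pi_single', mem_range]
  rw [if_pos (by omega), if_pos (by omega), if_pos hkm]
  omega

lemma sum_min_triplePoint_le {s : Finset ℕ} (hj : j ≠ 0) (hj' : j' ≠ 0)
    (hk : k + 2 * j ≤ d) (hk' : k' + 2 * j' ≤ d) (hne : (j, k) ≠ (j', k')) :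
    ∑ i ∈ s, min (triplePoint d j k i) (triplePoint d j' k' i) ≤ d := by
  have hsupp : ∀ i, triplePoint d j k i ≠ 0 → i ∈ ({k, k + j, k + 2 * j} : Finset ℕ) := by
    intro i hi
    rw [triplePoint_apply hj] at hi
    simp only [mem_insert, mem_singleton]
    split_ifs at hi <;> omega
  refine (sum_min_le_of_support_subset _ hsupp).trans ?_
  rw [sum_insert (by simp; omega), sum_insert (by simp; omega), sum_singleton]
  have hf₀ : triplePoint d j k k = d - (padicValNat 2 j + k + 1) := by
    rw [triplePoint_apply hj, if_pos rfl]
  have hf₁ : triplePoint d j k (k + j) = d := by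
    rw [triplePoint_apply hj, if_neg (by omega), if_pos rfl]
  have hf₂ : triplePoint d j k (k + 2 * j) = padicValNat 2 j + k + 2 := by
    rw [triplePoint_apply hj, if_neg (by omega), if_neg (by omega), if_pos rfl]
  have := padicValNat_two_add_le hj hk
  have := padicValNat_two_add_le hj' hk'
  have hν₁ : j = 2 * j' → padicValNat 2 j = padicValNat 2 j' + 1 := by
    rintro rfl; simp [hj']
  have hν₂ : j' = 2 * j → padicValNat 2 j' = padicValNat 2 j + 1 := by
    rintro rfl; simp [hj]
  have hν₀ : j = j' → padicValNat 2 j = padicValNat 2 j' := by rintro rfl; rfl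
  rw [hf₀, hf₁, hf₂]
  simp only [triplePoint_apply hj', ne_eq, Prod.mk.injEq] at hne ⊢
  clear hsupp
  generalize padicValNat 2 j = r at *
  generalize padicValNat 2 j' = r' at *
  split_ifs <;> omega

lemma sum_min_single_le {s : Finset ℕ} {g : ℕ → ℕ} (hg : g k ≤ d) :
    ∑ i ∈ s, min (Pi.single k (2 * d + 1) i) (g i) ≤ d := by
  have hsupp : ∀ i, (Pi.single k (2 * d + 1) : ℕ → ℕ) i ≠ 0 → i ∈ ({k} : Finset ℕ) := by
    intro i hi
    by_contra h
    exact hi (Pi.single_eq_of_ne (by simpa using h) _)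
  refine (sum_min_le_of_support_subset g hsupp).trans ?_
  rw [sum_singleton]
  exact (min_le_right _ _).trans hg

lemma sum_simplexPoint {m : ℕ} (hkm : k + 2 * j < m) (hk : k + 2 * j ≤ d) :
    ∑ i ∈ range m, simplexPoint d j k i = 2 * d + 1 := by
  unfold simplexPoint
  split_ifs with hj
  · rw [sum_pi_single', if_pos (mem_range.2 (by omega))]
  · exact sum_triplePoint hj hkm hk

lemma sum_min_simplexPoint_le {s : Finset ℕ} (hk : k + 2 * j ≤ d) (hk' : k' + 2 * j' ≤ d)
    (hne : (j, k) ≠ (j', k')) :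
    ∑ i ∈ s, min (simplexPoint d j k i) (simplexPoint d j' k' i) ≤ d := by
  by_cases hj : j = 0 <;> by_cases hj' : j' = 0 <;>
    simp only [simplexPoint, hj, hj', if_true, if_false]
  · subst hj hj'
    refine sum_min_single_le ?_
    rw [Pi.single_eq_of_ne (by simpa using hne)]
    omega
  · exact sum_min_single_le (triplePoint_le hj' hk' k)
  · simp_rw [min_comm (triplePoint d j k _)]
    exact sum_min_single_le (triplePoint_le hj hk k')
  · exact sum_min_triplePoint_le hj hj' hk hk' hne

end Construction

theorem stmt15_general (m : ℕ) (d : ℕ) (hd : m - 1 ≤ d) :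
    ∃ S : Finset (Fin m → ℕ),
      (∀ v ∈ S, ∑ j, v j = 2 * d + 1) ∧
      (∀ v ∈ S, ∀ w ∈ S, v ≠ w → 2 * d < ∑ j, Nat.dist (v j) (w j)) ∧
      S.card = if Even m then m * (m + 2) / 4 else (m + 1) ^ 2 / 4 := by
  set T := (range m).sigma fun j => range (m - 2 * j)
  have hT : ∀ p ∈ T, p.2 + 2 * p.1 < m := by
    intro p hp
    simp only [T, mem_sigma, mem_range] at hp
    omega
  obtain ⟨S, hsum, hsep, hcard⟩ := exists_separated_finset_of_sum_min_le m d T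
    (fun p => simplexPoint d p.1 p.2)
    (fun p hp => sum_simplexPoint (hT p hp) (by have := hT p hp; omega))
    (fun p hp q hq hpq => sum_min_simplexPoint_le (by have := hT p hp; omega)
      (by have := hT q hq; omega) fun h => hpq (by simpa [Sigma.ext_iff] using h))
  refine ⟨S, hsum, hsep, ?_⟩
  rw [hcard, card_sigma, ite_even_mul_div_four_eq_sq_div_four, ← sum_range_sub_two_mul]
  simp only [card_range]

/-- Let `m ≥ 1`. For every `d ≥ m − 1` there exists a `2d`-separated subset `S` of
`Δ(m−1, 2d+1) ⊆ ℤ_{≥0}^m` with `|S| = m(m+2)/4` if `m` is even and `|S| = (m+1)²/4`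
if `m` is odd. -/
theorem stmt15 (m : ℕ) (hm : 1 ≤ m) (d : ℕ) (hd : m - 1 ≤ d) :
    ∃ S : Finset (Fin m → ℕ),
      (∀ v ∈ S, ∑ j, v j = 2 * d + 1) ∧
      (∀ v ∈ S, ∀ w ∈ S, v ≠ w → 2 * d < ∑ j, Nat.dist (v j) (w j)) ∧
      S.card = if Even m then m * (m + 2) / 4 else (m + 1) ^ 2 / 4 :=
  stmt15_general m d hd
end

section
/- Let d ≥ 0, m ≥ 1 be integers and let S ⊆ Δ(m−1, 2d+1) be 2d-separated. Then for each corner point v_i = (2d+1)e_i, there is at most one point s ∈ S with |s − v_i|₁ ≤ 2d. Consequently there exists a 2d-separated set S' ⊆ Δ(m−1, 2d+1) with |S'| ≥ |S| containing all m corner points. -/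
open Finset

private lemma dist_corner (m d : ℕ) (i : Fin m) (v : Fin m → ℕ)
    (hv : ∑ j, v j = 2 * d + 1) :
    ∑ j, Nat.dist (v j) (if j = i then 2 * d + 1 else 0) + 2 * v i = 2 * (2 * d + 1) := by
  have hle : v i ≤ 2 * d + 1 :=
    hv ▸ Finset.single_le_sum (fun _ _ => Nat.zero_le _) (mem_univ i)
  have h1 : ∑ j, Nat.dist (v j) (if j = i then 2 * d + 1 else 0)
      = Nat.dist (v i) (2 * d + 1) + ∑ j ∈ univ.erase i, v j := by
    rw [← Finset.add_sum_erase _ _ (mem_univ i)]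
    simp only [if_pos rfl]
    congr 1
    refine Finset.sum_congr rfl fun j hj => ?_
    rw [if_neg (Finset.mem_erase.1 hj).1, Nat.dist_zero_right]
  have h2 : v i + ∑ j ∈ univ.erase i, v j = 2 * d + 1 := by
    rw [Finset.add_sum_erase _ _ (mem_univ i), hv]
  have h3 : Nat.dist (v i) (2 * d + 1) = (v i - (2 * d + 1)) + ((2 * d + 1) - v i) := rfl
  omega

private lemma sep_le (m d : ℕ) (i : Fin m) (s t : Fin m → ℕ)
    (hs : ∑ j, s j = 2 * d + 1) (ht : ∑ j, t j = 2 * d + 1)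
    (hsi : d + 1 ≤ s i) (hti : d + 1 ≤ t i) :
    ∑ j, Nat.dist (s j) (t j) ≤ 2 * d := by
  have h1 : ∑ j, Nat.dist (s j) (t j)
      = Nat.dist (s i) (t i) + ∑ j ∈ univ.erase i, Nat.dist (s j) (t j) :=
    (Finset.add_sum_erase _ _ (mem_univ i)).symm
  have h2 : ∑ j ∈ univ.erase i, Nat.dist (s j) (t j)
      ≤ ∑ j ∈ univ.erase i, (s j + t j) := by
    refine Finset.sum_le_sum fun j _ => ?_
    have : Nat.dist (s j) (t j) = (s j - t j) + (t j - s j) := rfl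
    omega
  have h3 : s i + ∑ j ∈ univ.erase i, s j = 2 * d + 1 := by
    rw [Finset.add_sum_erase _ _ (mem_univ i), hs]
  have h4 : t i + ∑ j ∈ univ.erase i, t j = 2 * d + 1 := by
    rw [Finset.add_sum_erase _ _ (mem_univ i), ht]
  have h5 : ∑ j ∈ univ.erase i, (s j + t j)
      = ∑ j ∈ univ.erase i, s j + ∑ j ∈ univ.erase i, t j := Finset.sum_add_distrib
  have h6 : Nat.dist (s i) (t i) = (s i - t i) + (t i - s i) := rfl
  omega

private lemma far (m d : ℕ) (i : Fin m) (v : Fin m → ℕ)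
    (hv : ∑ j, v j = 2 * d + 1) (hvi : v i ≤ d) :
    2 * d < ∑ j, Nat.dist (v j) (if j = i then 2 * d + 1 else 0) := by
  have := dist_corner m d i v hv
  omega

/-- Let `d ≥ 0`, `m ≥ 1`, and `S ⊆ Δ(m−1, 2d+1)` be `2d`-separated. Then: (i) for each
corner point `v i = (2d+1)·e i` there is at most one `s ∈ S` with `|s − v i|₁ ≤ 2d`;
(ii) there exists a `2d`-separated set `S' ⊆ Δ(m−1, 2d+1)` with `|S'| ≥ |S|` containing
all `m` corner points. -/
theorem stmt16 (m d : ℕ) (hm : 1 ≤ m) (S : Finset (Fin m → ℕ))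
    (hS : ∀ v ∈ S, ∑ j, v j = 2 * d + 1)
    (hsep : ∀ v ∈ S, ∀ w ∈ S, v ≠ w → 2 * d < ∑ j, Nat.dist (v j) (w j)) :
    (∀ i : Fin m, ∀ s ∈ S, ∀ t ∈ S,
        (∑ j, Nat.dist (s j) (if j = i then 2 * d + 1 else 0)) ≤ 2 * d →
        (∑ j, Nat.dist (t j) (if j = i then 2 * d + 1 else 0)) ≤ 2 * d → s = t) ∧
    (∃ S' : Finset (Fin m → ℕ),
      (∀ v ∈ S', ∑ j, v j = 2 * d + 1) ∧
      (∀ v ∈ S', ∀ w ∈ S', v ≠ w → 2 * d < ∑ j, Nat.dist (v j) (w j)) ∧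
      S.card ≤ S'.card ∧
      ∀ i : Fin m, (fun j => if j = i then 2 * d + 1 else 0) ∈ S') := by
  classical
  have part1 : ∀ i : Fin m, ∀ s ∈ S, ∀ t ∈ S,
      (∑ j, Nat.dist (s j) (if j = i then 2 * d + 1 else 0)) ≤ 2 * d →
      (∑ j, Nat.dist (t j) (if j = i then 2 * d + 1 else 0)) ≤ 2 * d → s = t := by
    intro i s hsS t htS hs2 ht2
    by_contra hne
    have h1 := dist_corner m d i s (hS s hsS)
    have h2 := dist_corner m d i t (hS t htS)
    have hsi : d + 1 ≤ s i := by omega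
    have hti : d + 1 ≤ t i := by omega
    have hle := sep_le m d i s t (hS s hsS) (hS t htS) hsi hti
    have hgt := hsep s hsS t htS hne
    omega
  refine ⟨part1, ?_⟩
  set c : Fin m → (Fin m → ℕ) := fun i j => if j = i then 2 * d + 1 else 0 with hc
  have hcsum : ∀ i, ∑ j, c i j = 2 * d + 1 := by
    intro i
    simp [hc]
  have hcval : ∀ i j, c i j = if j = i then 2 * d + 1 else 0 := fun _ _ => rfl
  set B := S.filter (fun v => ∃ i, d + 1 ≤ v i) with hB
  set C := Finset.image c univ with hC
  have hBS : B ⊆ S := Finset.filter_subset _ _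
  -- anything in S \ B has all coordinates ≤ d
  have hSB : ∀ v ∈ S \ B, ∀ i, v i ≤ d := by
    intro v hv i
    rcases Finset.mem_sdiff.1 hv with ⟨hvS, hvB⟩
    by_contra h
    exact hvB (Finset.mem_filter.2 ⟨hvS, ⟨i, by omega⟩⟩)
  refine ⟨C ∪ (S \ B), ?_, ?_, ?_, ?_⟩
  · intro v hv
    rcases Finset.mem_union.1 hv with h | h
    · rcases Finset.mem_image.1 h with ⟨i, _, rfl⟩
      exact hcsum i
    · exact hS v (Finset.mem_sdiff.1 h).1
  · -- separation
    intro v hv w hw hne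
    have key : ∀ i : Fin m, ∀ u : Fin m → ℕ, (∑ j, u j = 2 * d + 1) → u i ≤ d →
        2 * d < ∑ j, Nat.dist (c i j) (u j) := by
      intro i u hu hui
      have h := far m d i u hu hui
      have heq : ∑ j, Nat.dist (c i j) (u j)
          = ∑ j, Nat.dist (u j) (if j = i then 2 * d + 1 else 0) :=
        Finset.sum_congr rfl fun j _ => Nat.dist_comm _ _
      omega
    rcases Finset.mem_union.1 hv with hv' | hv' <;> rcases Finset.mem_union.1 hw with hw' | hw'
    · rcases Finset.mem_image.1 hv' with ⟨i, _, rfl⟩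
      rcases Finset.mem_image.1 hw' with ⟨j, _, rfl⟩
      have hij : i ≠ j := fun h => hne (by rw [h])
      have : c j i = 0 := by rw [hcval]; simp [hij]
      exact key i (c j) (hcsum j) (by omega)
    · rcases Finset.mem_image.1 hv' with ⟨i, _, rfl⟩
      exact key i w (hS w (Finset.mem_sdiff.1 hw').1) (hSB w hw' i)
    · rcases Finset.mem_image.1 hw' with ⟨i, _, rfl⟩
      have h := key i v (hS v (Finset.mem_sdiff.1 hv').1) (hSB v hv' i)
      have heq : ∑ j, Nat.dist (v j) (c i j) = ∑ j, Nat.dist (c i j) (v j) :=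
        Finset.sum_congr rfl fun j _ => Nat.dist_comm _ _
      omega
    · exact hsep v (Finset.mem_sdiff.1 hv').1 w (Finset.mem_sdiff.1 hw').1 hne
  · -- cardinality
    have hcinj : Function.Injective c := by
      intro i j h
      by_contra hij
      have h1 : c i i = 2 * d + 1 := by rw [hcval]; simp
      have h2 : c j i = 0 := by rw [hcval]; simp [hij]
      rw [h] at h1
      omega
    have hCcard : C.card = m := by
      rw [hC, Finset.card_image_of_injective _ hcinj, Finset.card_univ, Fintype.card_fin]
    have hdisj : Disjoint C (S \ B) := by
      rw [Finset.disjoint_left]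
      intro x hx hx'
      rcases Finset.mem_image.1 hx with ⟨i, _, rfl⟩
      have := hSB _ hx' i
      have : c i i = 2 * d + 1 := by rw [hcval]; simp
      omega
    have hBcard : B.card ≤ m := by
      have hsub : B ⊆ univ.biUnion (fun i => S.filter fun v => d + 1 ≤ v i) := by
        intro v hv
        rcases Finset.mem_filter.1 hv with ⟨hvS, i, hi⟩
        exact Finset.mem_biUnion.2 ⟨i, mem_univ i, Finset.mem_filter.2 ⟨hvS, hi⟩⟩
      calc B.card ≤ (univ.biUnion (fun i => S.filter fun v => d + 1 ≤ v i)).card :=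
            Finset.card_le_card hsub
        _ ≤ ∑ i, (S.filter fun v => d + 1 ≤ v i).card := Finset.card_biUnion_le
        _ ≤ ∑ _i : Fin m, 1 := by
            refine Finset.sum_le_sum fun i _ => Finset.card_le_one.2 fun s hs t ht => ?_
            rcases Finset.mem_filter.1 hs with ⟨hsS, hsi⟩
            rcases Finset.mem_filter.1 ht with ⟨htS, hti⟩
            have h1 := dist_corner m d i s (hS s hsS)
            have h2 := dist_corner m d i t (hS t htS)
            exact part1 i s hsS t htS (by omega) (by omega)
        _ = m := by simp
    have hun : (C ∪ (S \ B)).card = C.card + (S \ B).card :=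
      Finset.card_union_of_disjoint hdisj
    have hsb : (S \ B).card = S.card - B.card := Finset.card_sdiff_of_subset hBS
    have hBle : B.card ≤ S.card := Finset.card_le_card hBS
    omega
  · intro i
    exact Finset.mem_union_left _ (Finset.mem_image_of_mem c (mem_univ i))
end

section
/- Let R be a commutative ring and M = (a, b; c, −a) a trace-0 matrix in Mat₂(R). Then M is a commutator (M = XY − YX for some X, Y ∈ Mat₂(R)) if and only if the element a·e₂∧e₃ + b·e₃∧e₁ + c·e₁∧e₂ of ⋀²R³ is decomposable, i.e., equals v₁∧v₂ for some v₁, v₂ ∈ R³. -/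
open ExteriorAlgebra

section Aux

variable {R : Type*} [CommRing R]

private noncomputable abbrev E (R : Type*) [CommRing R] (i : Fin 3) :
    ExteriorAlgebra R (Fin 3 → R) := ι R (Pi.single i (1 : R))

private lemma swap_aux (x y : Fin 3 → R) :
    ι R y * ι R x = -(ι R x * ι R y) := by
  rw [eq_neg_iff_add_eq_zero]
  exact ι_add_mul_swap y x

private lemma expand_aux (v w : Fin 3 → R) :
    ι R v * ι R w =
      (v 1 * w 2 - v 2 * w 1) • (E R 1 * E R 2)
        + (v 2 * w 0 - v 0 * w 2) • (E R 2 * E R 0)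
        + (v 0 * w 1 - v 1 * w 0) • (E R 0 * E R 1) := by
  have hv : v = v 0 • (Pi.single 0 1 : Fin 3 → R) + v 1 • (Pi.single 1 1 : Fin 3 → R)
      + v 2 • (Pi.single 2 1 : Fin 3 → R) := by
    funext k; fin_cases k <;> simp
  have hw : w = w 0 • (Pi.single 0 1 : Fin 3 → R) + w 1 • (Pi.single 1 1 : Fin 3 → R)
      + w 2 • (Pi.single 2 1 : Fin 3 → R) := by
    funext k; fin_cases k <;> simp
  have h0 := ι_sq_zero (R := R) ((Pi.single 0 1 : Fin 3 → R))
  have h1 := ι_sq_zero (R := R) ((Pi.single 1 1 : Fin 3 → R))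
  have h2 := ι_sq_zero (R := R) ((Pi.single 2 1 : Fin 3 → R))
  have s01 := swap_aux (R := R) ((Pi.single 0 1 : Fin 3 → R)) (Pi.single 1 1)
  have s02 := swap_aux (R := R) ((Pi.single 0 1 : Fin 3 → R)) (Pi.single 2 1)
  have s12 := swap_aux (R := R) ((Pi.single 1 1 : Fin 3 → R)) (Pi.single 2 1)
  conv_lhs => rw [hv, hw]
  simp only [map_add, map_smul, add_mul, mul_add, smul_mul_assoc, mul_smul_comm,
    h0, h1, h2, s01, s02, s12, smul_zero, zero_add, add_zero, smul_neg, smul_smul, E]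
  module

private lemma expand_aux' (v w : Fin 3 → R) (p q r : R)
    (hp : p = v 1 * w 2 - v 2 * w 1) (hq : q = v 2 * w 0 - v 0 * w 2)
    (hr : r = v 0 * w 1 - v 1 * w 0) :
    p • (E R 1 * E R 2) + q • (E R 2 * E R 0) + r • (E R 0 * E R 1) = ι R v * ι R w := by
  rw [hp, hq, hr]; exact (expand_aux v w).symm

/-- The degree-2 coordinate functional: determinant of rows `i`,`j`. -/
private noncomputable def phi (R : Type*) [CommRing R] (i j : Fin 3) :
    (Fin 3 → R) [⋀^Fin 2]→ₗ[R] R :=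
  (Matrix.detRowAlternating).compLinearMap (LinearMap.funLeft R R ![i, j])

private lemma phi_apply (i j : Fin 3) (x y : Fin 3 → R) :
    phi R i j ![x, y] = x i * y j - x j * y i := by
  have h : phi R i j ![x, y]
      = Matrix.det (Matrix.of fun k : Fin 2 => (![x, y] k) ∘ ![i, j]) := rfl
  rw [h, Matrix.det_fin_two]
  simp

private noncomputable def fam (R : Type*) [CommRing R] (i j : Fin 3) :
    ∀ n, (Fin 3 → R) [⋀^Fin n]→ₗ[R] R
  | 2 => phi R i j
  | _ => 0

private lemma lift_fam (i j : Fin 3) (x y : Fin 3 → R) :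
    liftAlternating (fam R i j) (ι R x * ι R y) = x i * y j - x j * y i := by
  rw [liftAlternating_ι_mul, liftAlternating_ι, ← phi_apply i j x y]
  rfl

end Aux

/-- Let `R` be a commutative ring and `M = (a, b; c, −a)` a trace-0 matrix in `Mat₂(R)`.
Then `M` is a commutator if and only if `a·e₂∧e₃ + b·e₃∧e₁ + c·e₁∧e₂ ∈ ⋀²R³` is
decomposable (here `e₁, e₂, e₃` is the standard basis of `R³`, 0-indexed as
`e 0, e 1, e 2`, and wedges are computed in the exterior algebra of `R³`). -/
theorem stmt17 (R : Type*) [CommRing R] (a b c : R) :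
    (∃ X Y : Matrix (Fin 2) (Fin 2) R, !![a, b; c, -a] = X * Y - Y * X) ↔
      ∃ v w : Fin 3 → R,
        a • (ι R (Pi.single (1 : Fin 3) (1 : R)) * ι R (Pi.single (2 : Fin 3) (1 : R)))
          + b • (ι R (Pi.single (2 : Fin 3) (1 : R)) * ι R (Pi.single (0 : Fin 3) (1 : R)))
          + c • (ι R (Pi.single (0 : Fin 3) (1 : R)) * ι R (Pi.single (1 : Fin 3) (1 : R)))
          = ι R v * ι R w := by
  constructor
  · rintro ⟨X, Y, h⟩
    have h00 := congrFun (congrFun h 0) 0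
    have h01 := congrFun (congrFun h 0) 1
    have h10 := congrFun (congrFun h 1) 0
    simp [Matrix.mul_apply, Fin.sum_univ_succ] at h00 h01 h10
    refine ⟨![Y 0 0 - Y 1 1, Y 1 0, Y 0 1], ![X 0 0 - X 1 1, X 1 0, X 0 1],
      expand_aux' _ _ a b c ?_ ?_ ?_⟩
    · simp; linear_combination h00
    · simp; linear_combination h01
    · simp; linear_combination h10
  · rintro ⟨v, w, h⟩
    rw [expand_aux v w] at h
    have key : ∀ i j : Fin 3,
        liftAlternating (fam R i j)
          (a • (E R 1 * E R 2) + b • (E R 2 * E R 0) + c • (E R 0 * E R 1)) =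
        liftAlternating (fam R i j)
          ((v 1 * w 2 - v 2 * w 1) • (E R 1 * E R 2)
            + (v 2 * w 0 - v 0 * w 2) • (E R 2 * E R 0)
            + (v 0 * w 1 - v 1 * w 0) • (E R 0 * E R 1)) := by
      intro i j; exact congrArg _ h
    have ha := key 1 2
    have hb := key 2 0
    have hc := key 0 1
    simp [lift_fam, Pi.single_apply] at ha hb hc
    refine ⟨!![w 0, w 2; w 1, 0], !![v 0, v 2; v 1, 0], ?_⟩
    ext i j
    fin_cases i <;> fin_cases j
    · simp [Matrix.mul_apply, Fin.sum_univ_succ]; linear_combination ha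
    · simp [Matrix.mul_apply, Fin.sum_univ_succ]; linear_combination hb
    · simp [Matrix.mul_apply, Fin.sum_univ_succ]; linear_combination hc
    · simp [Matrix.mul_apply, Fin.sum_univ_succ]; linear_combination -ha
end

section
/- Let R be a Noetherian commutative ring and n ≥ 1. If for every maximal ideal 𝔪 of R the localization R_𝔪 has the property that every element of ⋀^n(R_𝔪)^{n+1} is decomposable, then for every prime ideal 𝔭 of R the localization R_𝔭 has the same property. -/
/-- A commutative ring `A` is `T_n^{n+1}` if every element of `⋀^n A^{n+1}` is
decomposable, i.e. equal to `v 0 ∧ ⋯ ∧ v (n-1)` for some vectors `v i ∈ A^{n+1}`. -/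
def IsTn (A : Type*) [CommRing A] (n : ℕ) : Prop :=
  ∀ w : (⋀[A]^n (Fin (n + 1) → A)),
    ∃ v : Fin n → (Fin (n + 1) → A),
      (w : ExteriorAlgebra A (Fin (n + 1) → A)) = ExteriorAlgebra.ιMulti A n v


/-!
A localization `B = S⁻¹A` inherits `T_n^{n+1}` from `A`: the `n`-vectors over `B` are spanned by
wedges of vectors with entries in `A`, so every `w ∈ ⋀^n B^{n+1}` is `(1/s) • φ(y)` with
`y ∈ ⋀^n A^{n+1}` and `φ` the base change of exterior algebras. Decomposing `y = v₁ ∧ ⋯ ∧ vₙ`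
over `A` and absorbing `1/s` into the first factor (possible as `n ≥ 1`) decomposes `w`.
Since `R_𝔭` is a localization of `R_𝔪` for a maximal ideal `𝔪 ⊇ 𝔭`, the theorem follows.
-/

open ExteriorAlgebra Submodule Set

theorem AlternatingMap.smul_mem_range {R M N ι : Type*} [CommSemiring R] [AddCommMonoid M]
    [Module R M] [AddCommMonoid N] [Module R N] [Nonempty ι] (f : M [⋀^ι]→ₗ[R] N) (c : R)
    {x : N} (hx : x ∈ range f) : c • x ∈ range f := by
  classical
  obtain ⟨v, rfl⟩ := hx
  obtain ⟨i⟩ := ‹Nonempty ι›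
  exact ⟨Function.update v i (c • v i), by rw [f.map_update_smul, Function.update_eq_self]⟩

theorem span_range_compLeft_algebraMap (A B ι : Type*) [CommSemiring A] [CommSemiring B]
    [Algebra A B] [Finite ι] :
    span B (range ((Algebra.linearMap A B).compLeft ι)) = ⊤ := by
  classical
  refine eq_top_iff.2 ((Pi.basisFun B ι).span_eq ▸ span_mono (range_subset_iff.2 fun j => ?_))
  refine ⟨Pi.single j 1, funext fun k => ?_⟩
  by_cases hk : k = j <;> simp [hk]

theorem ExteriorAlgebra.exteriorPower_eq_span_range_ιMulti_comp {B M N : Type*} [CommRing B]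
    [AddCommGroup N] [Module B N] (g : M → N) (hg : span B (range g) = ⊤) (n : ℕ) :
    ⋀[B]^n N = span B (range fun v : Fin n → M => ιMulti B n (g ∘ v)) := by
  rw [← exteriorPower.ιMulti_span_fixedDegree_of_span_eq_top B n N hg]
  congr
  ext x
  constructor
  · rintro ⟨a, ha, rfl⟩
    choose v hv using fun i => ha ⟨i, rfl⟩
    exact ⟨v, congrArg _ (funext hv)⟩
  · rintro ⟨v, rfl⟩
    exact ⟨g ∘ v, range_comp_subset_range v g, rfl⟩

namespace ExteriorAlgebra

variable {A B M N : Type*} [CommRing A] [CommRing B] [Algebra A B] [AddCommGroup M] [Module A M]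
  [AddCommGroup N] [Module B N] [Module A N] [IsScalarTower A B N]

variable (B) in
noncomputable def mapScalars (g : M →ₗ[A] N) : ExteriorAlgebra A M →ₐ[A] ExteriorAlgebra B N :=
  lift A ⟨(ι B).restrictScalars A ∘ₗ g, fun _ => ι_sq_zero _⟩

theorem mapScalars_ιMulti (g : M →ₗ[A] N) {n : ℕ} (v : Fin n → M) :
    mapScalars B g (ιMulti A n v) = ιMulti B n (g ∘ v) := by
  rw [ιMulti_apply, ιMulti_apply, map_list_prod, List.map_ofFn]
  congr 2
  funext i
  exact lift_ι_apply A _ _ (v i)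

theorem span_range_ιMulti_comp_eq_map (g : M →ₗ[A] N) (n : ℕ) :
    span A (range fun v : Fin n → M => ιMulti B n (g ∘ v)) =
      (⋀[A]^n M).map (mapScalars B g).toLinearMap := by
  rw [← ιMulti_span_fixedDegree, map_span, ← range_comp]
  congr
  funext v
  simp [mapScalars_ιMulti]

end ExteriorAlgebra

theorem isTn_of_isLocalization {A B : Type*} [CommRing A] [CommRing B] [Algebra A B]
    (S : Submonoid A) [IsLocalization S B] {n : ℕ} (hn : 1 ≤ n) (hA : IsTn A n) :
    IsTn B n := by
  have : Nonempty (Fin n) := ⟨⟨0, hn⟩⟩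
  let g := (Algebra.linearMap A B).compLeft (Fin (n + 1))
  rintro ⟨w, hw⟩
  rw [exteriorPower_eq_span_range_ιMulti_comp g (span_range_compLeft_algebraMap A B _),
    IsLocalization.mem_span_iff S, span_range_ιMulti_comp_eq_map] at hw
  obtain ⟨_, ⟨y, hy, rfl⟩, z, hwz⟩ := hw
  obtain ⟨v, hv : y = ιMulti A n v⟩ := hA ⟨y, hy⟩
  rw [AlgHom.toLinearMap_apply, hv, mapScalars_ιMulti] at hwz
  obtain ⟨v', hv'⟩ :=
    (ιMulti B n).smul_mem_range (IsLocalization.mk' B 1 z) (mem_range_self (g ∘ v))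
  exact ⟨v', hwz.trans hv'.symm⟩

theorem isTn_atPrime_of_le {R : Type*} [CommRing R] {𝔭 𝔮 : Ideal R} [𝔭.IsPrime] [𝔮.IsPrime]
    (hle : 𝔭 ≤ 𝔮) {n : ℕ} (hn : 1 ≤ n) (h𝔮 : IsTn (Localization.AtPrime 𝔮) n) :
    IsTn (Localization.AtPrime 𝔭) n := by
  have hc : 𝔮.primeCompl ≤ 𝔭.primeCompl := fun x hx hmem => hx (hle hmem)
  let := IsLocalization.localizationAlgebraOfSubmonoidLe
    (Localization.AtPrime 𝔮) (Localization.AtPrime 𝔭) _ _ hc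
  have := IsLocalization.localization_isScalarTower_of_submonoid_le
    (Localization.AtPrime 𝔮) (Localization.AtPrime 𝔭) _ _ hc
  have := IsLocalization.isLocalization_of_submonoid_le
    (Localization.AtPrime 𝔮) (Localization.AtPrime 𝔭) 𝔮.primeCompl 𝔭.primeCompl hc
  exact isTn_of_isLocalization (𝔭.primeCompl.map (algebraMap R (Localization.AtPrime 𝔮))) hn h𝔮

theorem stmt18_general (R : Type*) [CommRing R] (n : ℕ) (hn : 1 ≤ n)
    (h : ∀ (𝔪 : Ideal R) [𝔪.IsMaximal], IsTn (Localization.AtPrime 𝔪) n) :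
    ∀ (𝔭 : Ideal R) [𝔭.IsPrime], IsTn (Localization.AtPrime 𝔭) n := by
  intro 𝔭 h𝔭
  obtain ⟨𝔪, _, hle⟩ := 𝔭.exists_le_maximal h𝔭.ne_top
  exact isTn_atPrime_of_le hle hn (h 𝔪)

/-- Let `R` be a Noetherian commutative ring and `n ≥ 1`. If for every maximal ideal
`𝔪` the localization `R_𝔪` satisfies `T_n^{n+1}` (every element of `⋀^n (R_𝔪)^{n+1}`
is decomposable), then for every prime `𝔭` the localization `R_𝔭` satisfies
`T_n^{n+1}` as well. -/
theorem stmt18 (R : Type*) [CommRing R] [IsNoetherianRing R] (n : ℕ) (hn : 1 ≤ n)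
    (h : ∀ (𝔪 : Ideal R) [𝔪.IsMaximal], IsTn (Localization.AtPrime 𝔪) n) :
    ∀ (𝔭 : Ideal R) [𝔭.IsPrime], IsTn (Localization.AtPrime 𝔭) n :=
  stmt18_general R n hn h
end
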